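/- arXiv:0912.1693 — 3 statements merged into one kernel-verified Lean document; each statement's English description precedes it below -/
import Mathlib

section
/- Let M be a continuous nonnegative local martingale on a filtered probability space satisfying the usual conditions, with M_t → 0 almost surely as t → ∞, and let K ≥ 0. Define g_K = sup{t ≥ 0 : M_t = K} (with sup ∅ = 0). Then for every t ≥ 0, (K − M_t)^+ = K · P(g_K ≤ t | F_t) almost surely. -/
open MeasureTheory Filter Set
open scoped NNReal ENNReal

noncomputable section
/-- A process is a local martingale if there is a localizing sequence of stopping times
tending to infinity such that each stopped process is a martingale. -/
def IsLocalMartingale {Ω : Type*} [m : MeasurableSpace Ω] (ℱ : Filtration ℝ≥0 m)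
    (μ : Measure Ω) (M : ℝ≥0 → Ω → ℝ) : Prop :=
  ∃ τ : ℕ → Ω → ℝ≥0, (∀ n, IsStoppingTime ℱ (fun ω => ((τ n ω : ℝ≥0) : WithTop ℝ≥0))) ∧
    (∀ ω, Tendsto (fun n => τ n ω) atTop atTop) ∧
    ∀ n, Martingale (MeasureTheory.stoppedProcess M (fun ω => ((τ n ω : ℝ≥0) : WithTop ℝ≥0))) ℱ μ

namespace BSLP

variable {Ω : Type*} {m : MeasurableSpace Ω}

lemma stoppedProcess_coe_eq (M : ℝ≥0 → Ω → ℝ) (τ : Ω → ℝ≥0) :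
    stoppedProcess M (fun ω => ((τ ω : ℝ≥0) : WithTop ℝ≥0)) = fun t ω => M (min t (τ ω)) ω := by
  funext t ω
  simp only [stoppedProcess]
  rw [← WithTop.coe_min]
  rfl

/-- The event that a continuous adapted process reaches level `L` during `[r, a]` is
`ℱ a`-measurable. -/
lemma measurableSet_hit (ℱ : Filtration ℝ≥0 m) (M : ℝ≥0 → Ω → ℝ)
    (hadp : Adapted ℱ M) (hcont : ∀ ω, Continuous fun t => M t ω)
    (L : ℝ) {r a : ℝ≥0} (hra : r ≤ a) :
    MeasurableSet[ℱ a] {ω | ∃ u, r ≤ u ∧ u ≤ a ∧ L ≤ M u ω} := by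
  classical
  set d : ℕ → ℕ → ℝ≥0 := fun i j => min a (r + (i : ℝ≥0) / ((j : ℝ≥0) + 1)) with hd
  have hdmem : ∀ i j, r ≤ d i j ∧ d i j ≤ a := fun i j =>
    ⟨le_min hra le_self_add, min_le_left _ _⟩
  have hset : {ω | ∃ u, r ≤ u ∧ u ≤ a ∧ L ≤ M u ω}
      = ⋂ k : ℕ, ⋃ i : ℕ, ⋃ j : ℕ, {ω | L - 1 / ((k : ℝ) + 1) < M (d i j) ω} := by
    ext ω
    simp only [mem_setOf_eq, mem_iInter, mem_iUnion]
    constructor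
    · rintro ⟨u, hru, hua, hLu⟩ k
      have hcu : ContinuousAt (fun v => M v ω) u := (hcont ω).continuousAt
      have hpos : (0 : ℝ) < 1 / ((k : ℝ) + 1) := by positivity
      obtain ⟨δ, hδpos, hδ⟩ := Metric.continuousAt_iff.mp hcu (1 / ((k : ℝ) + 1)) hpos
      obtain ⟨j, hj⟩ := exists_nat_one_div_lt hδpos
      set i : ℕ := ⌊(u - r) * ((j : ℝ≥0) + 1)⌋₊ with hi
      have hjpos : (0 : ℝ≥0) < (j : ℝ≥0) + 1 := by positivity
      have hle : r + (i : ℝ≥0) / ((j : ℝ≥0) + 1) ≤ u := by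
        have h1 : (i : ℝ≥0) ≤ (u - r) * ((j : ℝ≥0) + 1) := Nat.floor_le (by positivity)
        have h2 : (i : ℝ≥0) / ((j : ℝ≥0) + 1) ≤ u - r := by
          rw [div_le_iff₀ hjpos]; exact h1
        calc r + (i : ℝ≥0) / ((j : ℝ≥0) + 1) ≤ r + (u - r) := add_le_add_right h2 r
          _ = u := add_tsub_cancel_of_le hru
      have hdij : d i j = r + (i : ℝ≥0) / ((j : ℝ≥0) + 1) := min_eq_right (hle.trans hua)
      refine ⟨i, j, ?_⟩
      have hup : u < d i j + 1 / ((j : ℝ≥0) + 1) := by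
        rw [hdij]
        have h3 : (u - r) * ((j : ℝ≥0) + 1) < (i : ℝ≥0) + 1 := Nat.lt_floor_add_one _
        have h4 : u - r < ((i : ℝ≥0) + 1) / ((j : ℝ≥0) + 1) := by
          rw [lt_div_iff₀ hjpos]; exact h3
        calc u ≤ r + (u - r) := by rw [add_tsub_cancel_of_le hru]
          _ < r + ((i : ℝ≥0) + 1) / ((j : ℝ≥0) + 1) := by exact add_lt_add_right h4 r
          _ = r + (i : ℝ≥0) / ((j : ℝ≥0) + 1) + 1 / ((j : ℝ≥0) + 1) := by
              rw [add_div, add_assoc]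
      have hdist : dist (d i j) u < δ := by
        have h5' : (d i j : ℝ) ≤ (u : ℝ) := by
          have h5'' : d i j ≤ u := le_of_le_of_eq (le_of_eq hdij) rfl |>.trans hle
          exact_mod_cast h5''
        have h6 : (u : ℝ) < (d i j : ℝ) + 1 / ((j : ℝ) + 1) := by
          have := hup
          have h7 : ((d i j + 1 / ((j : ℝ≥0) + 1) : ℝ≥0) : ℝ)
              = (d i j : ℝ) + 1 / ((j : ℝ) + 1) := by push_cast; ring
          calc (u : ℝ) < ((d i j + 1 / ((j : ℝ≥0) + 1) : ℝ≥0) : ℝ) := by exact_mod_cast this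
            _ = _ := h7
        rw [NNReal.dist_eq, abs_sub_comm, abs_of_nonneg (by linarith)]
        linarith
      have h8 := hδ hdist
      rw [Real.dist_eq, abs_sub_lt_iff] at h8
      have := h8.2
      linarith
    · intro h
      obtain ⟨u, hu, hmax⟩ := (isCompact_Icc (a := r) (b := a)).exists_isMaxOn
        (Set.nonempty_Icc.mpr hra) (hcont ω).continuousOn
      refine ⟨u, hu.1, hu.2, ?_⟩
      by_contra hlt
      push_neg at hlt
      obtain ⟨k, hk⟩ := exists_nat_one_div_lt (sub_pos.mpr hlt)
      obtain ⟨i, j, hij⟩ := h k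
      have hle : M (d i j) ω ≤ M u ω := hmax ⟨(hdmem i j).1, (hdmem i j).2⟩
      linarith
  rw [hset]
  refine MeasurableSet.iInter fun k => MeasurableSet.iUnion fun i =>
    MeasurableSet.iUnion fun j => ?_
  have hM : StronglyMeasurable[ℱ (d i j)] (M (d i j)) := (hadp (d i j)).stronglyMeasurable
  exact (ℱ.mono (hdmem i j).2) _ (measurableSet_lt measurable_const hM.measurable)

/-- First hitting time of `[L, ∞)` by `M` during `[r, s]` (equals `s` if no hit). -/
def hitT (M : ℝ≥0 → Ω → ℝ) (L : ℝ) (r s : ℝ≥0) (ω : Ω) : ℝ≥0 :=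
  sInf ({u | r ≤ u ∧ u ≤ s ∧ L ≤ M u ω} ∪ {s})

variable {M : ℝ≥0 → Ω → ℝ} {L : ℝ} {r s : ℝ≥0}

lemma hitT_mem (hcont : ∀ ω, Continuous fun t => M t ω) (ω : Ω) :
    hitT M L r s ω ∈ ({u | r ≤ u ∧ u ≤ s ∧ L ≤ M u ω} ∪ {s} : Set ℝ≥0) := by
  refine IsClosed.csInf_mem ?_ ⟨s, Or.inr rfl⟩ (OrderBot.bddBelow _)
  have h1 : {u | r ≤ u ∧ u ≤ s ∧ L ≤ M u ω} = Icc r s ∩ (fun u => M u ω) ⁻¹' Ici L := by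
    ext u; simp [Set.mem_Icc, and_assoc]
  exact ((h1 ▸ (isClosed_Icc.inter (isClosed_Ici.preimage (hcont ω))))).union isClosed_singleton

lemma hitT_le_s (ω : Ω) : hitT M L r s ω ≤ s :=
  csInf_le (OrderBot.bddBelow _) (Or.inr rfl)

lemma le_hitT (hrs : r ≤ s) (ω : Ω) : r ≤ hitT M L r s ω := by
  refine le_csInf ⟨s, Or.inr rfl⟩ ?_
  rintro b (⟨h1, _, _⟩ | rfl)
  exacts [h1, hrs]

lemma hitT_le_of_mem (ω : Ω) {u : ℝ≥0} (hru : r ≤ u) (hus : u ≤ s)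
    (hMu : L ≤ M u ω) : hitT M L r s ω ≤ u :=
  csInf_le (OrderBot.bddBelow _)
    (show u ∈ ({u | r ≤ u ∧ u ≤ s ∧ L ≤ M u ω} ∪ {s} : Set ℝ≥0) from Or.inl ⟨hru, hus, hMu⟩)

lemma lt_hitT_imp (ω : Ω) {u : ℝ≥0} (hru : r ≤ u) (hus : u ≤ s)
    (h : u < hitT M L r s ω) : M u ω < L := by
  by_contra hc
  push_neg at hc
  exact absurd (hitT_le_of_mem ω hru hus hc) (not_le.mpr h)

/-- On the event that the process starts strictly below `L`, it stays `≤ L` up to the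
hitting time. -/
lemma hitT_bound (hcont : ∀ ω, Continuous fun t => M t ω) (hrs : r ≤ s) (ω : Ω)
    (hMr : M r ω < L) {u : ℝ≥0} (hru : r ≤ u) (hu : u ≤ hitT M L r s ω) : M u ω ≤ L := by
  rcases lt_or_eq_of_le hu with hlt | heq
  · exact (lt_hitT_imp ω hru (hlt.le.trans (hitT_le_s ω)) hlt).le
  · rcases eq_or_lt_of_le hru with hrV | hrV
    · rw [← hrV]; exact hMr.le
    · -- u = hitT > r : use approach from the left
      have hne : Filter.NeBot (nhdsWithin u (Ico r u)) := by
        apply mem_closure_iff_nhdsWithin_neBot.mp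
        rw [closure_Ico (ne_of_lt hrV)]
        exact ⟨hrV.le, le_rfl⟩
      have htd : Tendsto (fun v => M v ω) (nhdsWithin u (Ico r u)) (nhds (M u ω)) :=
        ((hcont ω).tendsto u).mono_left nhdsWithin_le_nhds
      refine le_of_tendsto htd ?_
      filter_upwards [self_mem_nhdsWithin] with x hx
      have hxV : x < hitT M L r s ω := hx.2.trans_le (heq ▸ le_rfl)
      exact (lt_hitT_imp ω hx.1 (hxV.le.trans (hitT_le_s ω)) hxV).le

lemma isStoppingTime_hitT (ℱ : Filtration ℝ≥0 m)
    (hadp : Adapted ℱ M) (hcont : ∀ ω, Continuous fun t => M t ω) (hrs : r ≤ s) :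
    IsStoppingTime ℱ (fun ω => ((hitT M L r s ω : ℝ≥0) : WithTop ℝ≥0)) := by
  intro a
  simp only [WithTop.coe_le_coe]
  by_cases hsa : s ≤ a
  · have : {ω | hitT M L r s ω ≤ a} = univ :=
      eq_univ_of_forall fun ω => (hitT_le_s ω).trans hsa
    rw [this]; exact MeasurableSet.univ
  by_cases hra : r ≤ a
  · have : {ω | hitT M L r s ω ≤ a} = {ω | ∃ u, r ≤ u ∧ u ≤ a ∧ L ≤ M u ω} := by
      ext ω
      simp only [mem_setOf_eq]
      constructor
      · intro h
        rcases hitT_mem hcont (M := M) (L := L) (r := r) (s := s) ω with hmem | hmem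
        · exact ⟨hitT M L r s ω, hmem.1, h, hmem.2.2⟩
        · rw [mem_singleton_iff] at hmem
          exact absurd (hmem ▸ h : s ≤ a) hsa
      · rintro ⟨u, h1, h2, h3⟩
        exact (hitT_le_of_mem ω h1 (h2.trans (not_le.mp hsa).le) h3).trans h2
    rw [this]; exact measurableSet_hit ℱ M hadp hcont L hra
  · have : {ω | hitT M L r s ω ≤ a} = ∅ := by
      ext ω
      simp only [mem_setOf_eq, mem_empty_iff_false, iff_false, not_le]
      exact lt_of_lt_of_le (not_le.mp hra) (le_hitT hrs ω)
    rw [this]; exact @MeasurableSet.empty _ (ℱ a)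

/-- Dyadic upper approximation of the hitting time, a stopping time with countable range. -/
def gridR (M : ℝ≥0 → Ω → ℝ) (L : ℝ) (r s : ℝ≥0) (j : ℕ) (ω : Ω) : ℝ≥0 :=
  min s (r + (⌈(hitT M L r s ω - r) * 2 ^ j⌉₊ : ℝ≥0) / 2 ^ j)

lemma two_pow_pos (j : ℕ) : (0 : ℝ≥0) < 2 ^ j := by positivity

lemma hitT_le_gridR (hrs : r ≤ s) (j : ℕ) (ω : Ω) :
    hitT M L r s ω ≤ gridR M L r s j ω := by
  refine le_min (hitT_le_s ω) ?_
  have h1 : hitT M L r s ω - r ≤ (⌈(hitT M L r s ω - r) * 2 ^ j⌉₊ : ℝ≥0) / 2 ^ j := by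
    rw [le_div_iff₀ (two_pow_pos j)]
    exact Nat.le_ceil _
  calc hitT M L r s ω = r + (hitT M L r s ω - r) := (add_tsub_cancel_of_le (le_hitT hrs ω)).symm
    _ ≤ r + (⌈(hitT M L r s ω - r) * 2 ^ j⌉₊ : ℝ≥0) / 2 ^ j := add_le_add_right h1 r

lemma gridR_le_s (j : ℕ) (ω : Ω) : gridR M L r s j ω ≤ s := min_le_left _ _

lemma gridR_le_hitT_add (hrs : r ≤ s) (j : ℕ) (ω : Ω) :
    gridR M L r s j ω ≤ hitT M L r s ω + (2 ^ j : ℝ≥0)⁻¹ := by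
  refine (min_le_right _ _).trans ?_
  have h1 : (⌈(hitT M L r s ω - r) * 2 ^ j⌉₊ : ℝ≥0) ≤ (hitT M L r s ω - r) * 2 ^ j + 1 :=
    (Nat.ceil_lt_add_one (by positivity)).le
  have h2 : (⌈(hitT M L r s ω - r) * 2 ^ j⌉₊ : ℝ≥0) / 2 ^ j
      ≤ (hitT M L r s ω - r) + (2 ^ j : ℝ≥0)⁻¹ := by
    rw [div_le_iff₀ (two_pow_pos j), add_mul, inv_mul_cancel₀ (two_pow_pos j).ne']
    exact h1
  calc r + (⌈(hitT M L r s ω - r) * 2 ^ j⌉₊ : ℝ≥0) / 2 ^ j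
      ≤ r + ((hitT M L r s ω - r) + (2 ^ j : ℝ≥0)⁻¹) := add_le_add_right h2 r
    _ = (r + (hitT M L r s ω - r)) + (2 ^ j : ℝ≥0)⁻¹ := (add_assoc _ _ _).symm
    _ = hitT M L r s ω + (2 ^ j : ℝ≥0)⁻¹ := by rw [add_tsub_cancel_of_le (le_hitT hrs ω)]

lemma tendsto_gridR (hrs : r ≤ s) (ω : Ω) :
    Tendsto (fun j => gridR M L r s j ω) atTop (nhds (hitT M L r s ω)) := by
  have h0 : Tendsto (fun j : ℕ => ((2 : ℝ≥0) ^ j)⁻¹) atTop (nhds 0) := by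
    simp_rw [← inv_pow]
    exact NNReal.tendsto_pow_atTop_nhds_zero_of_lt_one
      (by
        have h2 : (1 : ℝ≥0) < 2 := by norm_num
        simpa using (inv_lt_one_of_one_lt₀ h2))
  have h1 : Tendsto (fun j : ℕ => hitT M L r s ω + ((2 : ℝ≥0) ^ j)⁻¹) atTop
      (nhds (hitT M L r s ω)) := by
    have h2 := Filter.Tendsto.add (tendsto_const_nhds (α := ℕ) (f := atTop)
      (x := hitT M L r s ω)) h0
    simpa using h2
  exact tendsto_of_tendsto_of_tendsto_of_le_of_le tendsto_const_nhds h1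
    (fun j => hitT_le_gridR hrs j ω) (fun j => gridR_le_hitT_add hrs j ω)

lemma countable_range_gridR (j : ℕ) :
    (Set.range (gridR M L r s j)).Countable := by
  refine (Set.countable_range (fun n : ℕ => min s (r + (n : ℝ≥0) / 2 ^ j))).mono ?_
  rintro x ⟨ω, rfl⟩
  exact ⟨⌈(hitT M L r s ω - r) * 2 ^ j⌉₊, rfl⟩

lemma isStoppingTime_gridR (ℱ : Filtration ℝ≥0 m)
    (hadp : Adapted ℱ M) (hcont : ∀ ω, Continuous fun t => M t ω) (hrs : r ≤ s) (j : ℕ) :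
    IsStoppingTime ℱ (fun ω => ((gridR M L r s j ω : ℝ≥0) : WithTop ℝ≥0)) := by
  intro a
  simp only [WithTop.coe_le_coe]
  by_cases hsa : s ≤ a
  · have : {ω | gridR M L r s j ω ≤ a} = univ :=
      eq_univ_of_forall fun ω => (gridR_le_s j ω).trans hsa
    rw [this]; exact MeasurableSet.univ
  by_cases hra : r ≤ a
  · set c : ℝ≥0 := r + (⌊(a - r) * 2 ^ j⌋₊ : ℝ≥0) / 2 ^ j with hc
    have hca : c ≤ a := by
      have h1 : (⌊(a - r) * 2 ^ j⌋₊ : ℝ≥0) / 2 ^ j ≤ a - r := by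
        rw [div_le_iff₀ (two_pow_pos j)]
        exact Nat.floor_le (by positivity)
      calc c ≤ r + (a - r) := add_le_add_right h1 r
        _ = a := add_tsub_cancel_of_le hra
    have hset : {ω | gridR M L r s j ω ≤ a} = {ω | hitT M L r s ω ≤ c} := by
      ext ω
      simp only [gridR, mem_setOf_eq, min_le_iff]
      constructor
      · rintro (h | h)
        · exact absurd h hsa
        · have h1 : (⌈(hitT M L r s ω - r) * 2 ^ j⌉₊ : ℝ≥0) / 2 ^ j ≤ a - r :=
            (le_tsub_iff_left hra).mpr h
          have h2 : (⌈(hitT M L r s ω - r) * 2 ^ j⌉₊ : ℝ≥0) ≤ (a - r) * 2 ^ j := by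
            rwa [div_le_iff₀ (two_pow_pos j)] at h1
          have h3 : ⌈(hitT M L r s ω - r) * 2 ^ j⌉₊ ≤ ⌊(a - r) * 2 ^ j⌋₊ :=
            Nat.le_floor h2
          have h4 : (hitT M L r s ω - r) * 2 ^ j ≤ (⌊(a - r) * 2 ^ j⌋₊ : ℝ≥0) :=
            Nat.ceil_le.mp h3
          have h5 : hitT M L r s ω - r ≤ (⌊(a - r) * 2 ^ j⌋₊ : ℝ≥0) / 2 ^ j := by
            rw [le_div_iff₀ (two_pow_pos j)]; exact h4
          exact tsub_le_iff_left.mp h5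
      · intro h
        right
        have h5 : hitT M L r s ω - r ≤ (⌊(a - r) * 2 ^ j⌋₊ : ℝ≥0) / 2 ^ j :=
          tsub_le_iff_left.mpr h
        have h4 : (hitT M L r s ω - r) * 2 ^ j ≤ (⌊(a - r) * 2 ^ j⌋₊ : ℝ≥0) := by
          rwa [le_div_iff₀ (two_pow_pos j)] at h5
        have h3 : ⌈(hitT M L r s ω - r) * 2 ^ j⌉₊ ≤ ⌊(a - r) * 2 ^ j⌋₊ := Nat.ceil_le.mpr h4
        have h2 : (⌈(hitT M L r s ω - r) * 2 ^ j⌉₊ : ℝ≥0) ≤ (⌊(a - r) * 2 ^ j⌋₊ : ℝ≥0) := by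
          exact_mod_cast h3
        have h1 : (⌈(hitT M L r s ω - r) * 2 ^ j⌉₊ : ℝ≥0) / 2 ^ j ≤ a - r := by
          rw [div_le_iff₀ (two_pow_pos j)]
          exact h2.trans (Nat.floor_le (by positivity))
        exact (le_tsub_iff_left hra).mp h1
    rw [hset]
    exact (ℱ.mono hca) _ (by simpa only [WithTop.coe_le_coe] using isStoppingTime_hitT ℱ hadp hcont hrs c)
  · have : {ω | gridR M L r s j ω ≤ a} = ∅ := by
      ext ω
      simp only [mem_setOf_eq, mem_empty_iff_false, iff_false, not_le]
      have : r ≤ gridR M L r s j ω := le_min hrs le_self_add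
      exact lt_of_lt_of_le (not_le.mp hra) this
    rw [this]; exact @MeasurableSet.empty _ (ℱ a)

lemma le_gridR (hrs : r ≤ s) (j : ℕ) (ω : Ω) : r ≤ gridR M L r s j ω :=
  (le_hitT hrs ω).trans (hitT_le_gridR hrs j ω)

/-- A set in `ℱ r` belongs to the σ-algebra of any stopping time that is `≥ r`. -/
lemma measurableSet_stopping_of_ge (ℱ : Filtration ℝ≥0 m) {τ : Ω → ℝ≥0}
    (hτ : IsStoppingTime ℱ (fun ω => ((τ ω : ℝ≥0) : WithTop ℝ≥0))) {r : ℝ≥0} (hge : ∀ ω, r ≤ τ ω) {B : Set Ω}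
    (hB : MeasurableSet[ℱ r] B) : MeasurableSet[hτ.measurableSpace] B := by
  exact hτ.le_measurableSpace_of_const_le (fun ω => WithTop.coe_le_coe.mpr (hge ω)) _ hB

/-- Core optional-sampling identity: the value of the continuous nonneg local martingale at
the hitting time of level `L` over `[r,s]`, integrated over a set in `ℱ r` on which
`M r < L`, has the same integral as `M r`. -/
theorem setIntegral_stoppedValue_hitT
    (ℱ : Filtration ℝ≥0 m) (μ : Measure Ω) [IsProbabilityMeasure μ]
    (M : ℝ≥0 → Ω → ℝ) (hadp : Adapted ℱ M)
    (hcont : ∀ ω, Continuous fun t => M t ω) (hnonneg : ∀ t ω, 0 ≤ M t ω)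
    (τ : ℕ → Ω → ℝ≥0) (hτst : ∀ n, IsStoppingTime ℱ (fun ω => ((τ n ω : ℝ≥0) : WithTop ℝ≥0)))
    (hτtend : ∀ ω, Tendsto (fun n => τ n ω) atTop atTop)
    (hτmart : ∀ n, Martingale
      (MeasureTheory.stoppedProcess M (fun ω => ((τ n ω : ℝ≥0) : WithTop ℝ≥0))) ℱ μ)
    {L : ℝ} (hL : 0 < L) {r s : ℝ≥0} (hrs : r ≤ s)
    {B : Set Ω} (hB : MeasurableSet[ℱ r] B) (hBsub : ∀ ω ∈ B, M r ω < L) :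
    ∫ ω in B, M (hitT M L r s ω) ω ∂μ = ∫ ω in B, M r ω ∂μ := by
  classical
  have hBm : MeasurableSet B := ℱ.le r _ hB
  have hVst : IsStoppingTime ℱ (fun ω => ((hitT M L r s ω : ℝ≥0) : WithTop ℝ≥0)) :=
    isStoppingTime_hitT ℱ hadp hcont hrs
  have hprogM : IsStronglyProgressive ℱ M :=
    StronglyAdapted.isStronglyProgressive_of_continuous (fun t => (hadp t).stronglyMeasurable) hcont
  have hVle : ∀ ω, hitT M L r s ω ≤ s := fun ω => hitT_le_s ω
  have hVle' : ∀ ω, ((hitT M L r s ω : ℝ≥0) : WithTop ℝ≥0) ≤ (s : WithTop ℝ≥0) :=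
    fun ω => WithTop.coe_le_coe.mpr (hitT_le_s ω)
  -- per-n optional sampling result
  have key : ∀ n : ℕ,
      (∫ ω in B, M (min (hitT M L r s ω) (τ n ω)) ω ∂μ
        = ∫ ω in B, M (min r (τ n ω)) ω ∂μ)
      ∧ Integrable (fun ω => M (min (hitT M L r s ω) (τ n ω)) ω) μ := by
    intro n
    set X := MeasureTheory.stoppedProcess M (fun ω => ((τ n ω : ℝ≥0) : WithTop ℝ≥0)) with hX
    have hXeq : X = fun t ω => M (min t (τ n ω)) ω := stoppedProcess_coe_eq M (τ n)
    have hmart := hτmart n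
    have hXprog : IsStronglyProgressive ℱ X := hprogM.stoppedProcess (hτst n)
    have hXcont : ∀ ω, Continuous fun t => X t ω := fun ω => by
      rw [hXeq]; exact (hcont ω).comp (continuous_id.min continuous_const)
    set f : ℕ → Ω → ℝ := fun j =>
      stoppedValue X (fun ω => ((gridR M L r s j ω : ℝ≥0) : WithTop ℝ≥0)) with hf
    have hgst : ∀ j, IsStoppingTime ℱ (fun ω => ((gridR M L r s j ω : ℝ≥0) : WithTop ℝ≥0)) :=
      fun j => isStoppingTime_gridR ℱ hadp hcont hrs j
    have hgle : ∀ j, ∀ ω, ((gridR M L r s j ω : ℝ≥0) : WithTop ℝ≥0) ≤ (s : WithTop ℝ≥0) :=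
      fun j ω => WithTop.coe_le_coe.mpr (gridR_le_s j ω)
    have hXs_int : Integrable (X s) μ := hmart.integrable s
    have hos : ∀ j, f j =ᵐ[μ] μ[X s | ((hgst j).measurableSpace)] := fun j =>
      hmart.stoppedValue_ae_eq_condExp_of_le_const_of_countable_range (hgst j) (hgle j)
        (((countable_range_gridR j).image ((↑) : ℝ≥0 → WithTop ℝ≥0)).mono
          (by rintro _ ⟨ω, rfl⟩; exact ⟨_, ⟨ω, rfl⟩, rfl⟩))
    set g : Ω → ℝ := stoppedValue X (fun ω => ((hitT M L r s ω : ℝ≥0) : WithTop ℝ≥0)) with hg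
    have hconv : ∀ ω, Tendsto (fun j => f j ω) atTop (nhds (g ω)) := by
      intro ω
      have h1 : Tendsto (fun j => gridR M L r s j ω) atTop (nhds (hitT M L r s ω)) :=
        tendsto_gridR hrs ω
      exact (((hXcont ω).continuousAt).tendsto).comp h1
    have hfm : ∀ j, AEStronglyMeasurable (f j) μ := fun j =>
      ((measurable_stoppedValue hXprog (hgst j)).mono
        ((hgst j).measurableSpace_le_of_le (hgle j)) le_rfl).aestronglyMeasurable
    have hgmeas : Measurable g := (measurable_stoppedValue hXprog hVst).mono
      (hVst.measurableSpace_le_of_le hVle') le_rfl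
    have hgl1 : MemLp g 1 μ := by
      refine ⟨hgmeas.aestronglyMeasurable, ?_⟩
      have hle : eLpNorm g 1 μ ≤ atTop.liminf (fun j => eLpNorm (f j) 1 μ) :=
        Lp.eLpNorm_lim_le_liminf_eLpNorm hfm g (Eventually.of_forall hconv)
      have hbd : ∀ j, eLpNorm (f j) 1 μ ≤ eLpNorm (X s) 1 μ := fun j => by
        rw [eLpNorm_congr_ae (hos j)]
        exact eLpNorm_one_condExp_le_eLpNorm _
      have h2 : atTop.liminf (fun j => eLpNorm (f j) 1 μ) ≤ eLpNorm (X s) 1 μ :=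
        liminf_le_of_frequently_le (Frequently.of_forall hbd)
      exact lt_of_le_of_lt (hle.trans h2) (memLp_one_iff_integrable.mpr hXs_int).2
    have hui : UnifIntegrable f 1 μ := by
      have h3 := (hXs_int.uniformIntegrable_condExp
        (fun j : ℕ => ((hgst j).measurableSpace_le_of_le (hgle j)))).2.1
      exact h3.ae_eq (fun j => (hos j).symm)
    have hL1 : Tendsto (fun j => eLpNorm (f j - g) 1 μ) atTop (nhds 0) :=
      tendsto_Lp_finite_of_tendsto_ae le_rfl ENNReal.one_ne_top hfm hgl1 hui
        (Eventually.of_forall hconv)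
    have hfint : ∀ j, Integrable (f j) μ := fun j => (integrable_condExp).congr (hos j).symm
    have hg_int : Integrable g μ := memLp_one_iff_integrable.mp hgl1
    have hsetconv : Tendsto (fun j => ∫ ω in B, f j ω ∂μ) atTop
        (nhds (∫ ω in B, g ω ∂μ)) :=
      tendsto_setIntegral_of_L1' g hg_int.aestronglyMeasurable (Eventually.of_forall hfint) hL1 B
    have hseteq : ∀ j, ∫ ω in B, f j ω ∂μ = ∫ ω in B, X s ω ∂μ := by
      intro j
      have hBj : MeasurableSet[(hgst j).measurableSpace] B :=
        measurableSet_stopping_of_ge ℱ (hgst j) (fun ω => le_gridR hrs j ω) hB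
      calc ∫ ω in B, f j ω ∂μ
          = ∫ ω in B, (μ[X s | ((hgst j).measurableSpace)]) ω ∂μ :=
            integral_congr_ae (ae_restrict_of_ae (hos j))
        _ = ∫ ω in B, X s ω ∂μ :=
            setIntegral_condExp ((hgst j).measurableSpace_le_of_le (hgle j)) hXs_int hBj
    have hgXs : ∫ ω in B, g ω ∂μ = ∫ ω in B, X s ω ∂μ := by
      have heq : (fun j : ℕ => ∫ ω in B, f j ω ∂μ) = fun _ => ∫ ω in B, X s ω ∂μ :=
        funext hseteq
      rw [heq] at hsetconv
      exact tendsto_nhds_unique hsetconv tendsto_const_nhds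
    have hXsr : ∫ ω in B, X s ω ∂μ = ∫ ω in B, X r ω ∂μ :=
      (hmart.setIntegral_eq hrs hB).symm
    refine ⟨?_, ?_⟩
    · have : ∫ ω in B, g ω ∂μ = ∫ ω in B, X r ω ∂μ := hgXs.trans hXsr
      rw [hg, hXeq] at this
      exact this
    · rw [hg, hXeq] at hg_int
      exact hg_int
  -- pass to the limit in n
  set V := hitT M L r s with hV
  set h : ℕ → Ω → ℝ := fun n ω => M (min (V ω) (τ n ω)) ω - M (min r (τ n ω)) ω with hh
  have hXr_int : ∀ n, Integrable (fun ω => M (min r (τ n ω)) ω) μ := fun n =>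
    by have := (hτmart n).integrable r; rw [stoppedProcess_coe_eq] at this; exact this
  have hzero : ∀ n, ∫ ω in B, h n ω ∂μ = 0 := by
    intro n
    have h1 := (key n).1
    rw [show h = fun n ω => M (min (V ω) (τ n ω)) ω - M (min r (τ n ω)) ω from rfl]
    rw [integral_sub ((key n).2.restrict) ((hXr_int n).restrict), h1, sub_self]
  have hmeas1 : ∀ n, AEStronglyMeasurable (h n) μ := by
    intro n
    exact ((key n).2.aestronglyMeasurable.sub (hXr_int n).aestronglyMeasurable)
  have hlimh : ∀ ω, Tendsto (fun n => h n ω) atTop (nhds (M (V ω) ω - M r ω)) := by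
    intro ω
    have hev : ∀ᶠ n in atTop, h n ω = M (V ω) ω - M r ω := by
      filter_upwards [(hτtend ω).eventually_ge_atTop s] with n hn
      have h1 : min (V ω) (τ n ω) = V ω := min_eq_left ((hVle ω).trans hn)
      have h2 : min r (τ n ω) = r := min_eq_left (hrs.trans hn)
      simp only [hh, h1, h2]
    refine Tendsto.congr' ?_ tendsto_const_nhds
    filter_upwards [hev] with n hn
    exact hn.symm
  have hbound : ∀ n, ∀ᵐ ω ∂μ.restrict B, ‖h n ω‖ ≤ 2 * L := by
    intro n
    rw [ae_restrict_iff' hBm]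
    refine Eventually.of_forall fun ω hω => ?_
    rcases le_or_gt r (τ n ω) with hle | hlt
    · have hw1 : r ≤ min (V ω) (τ n ω) := le_min (le_hitT hrs ω) hle
      have hw2 : min (V ω) (τ n ω) ≤ V ω := min_le_left _ _
      have hb1 : M (min (V ω) (τ n ω)) ω ≤ L :=
        hitT_bound hcont hrs ω (hBsub ω hω) hw1 hw2
      have hb1' : 0 ≤ M (min (V ω) (τ n ω)) ω := hnonneg _ ω
      have h2 : min r (τ n ω) = r := min_eq_left hle
      have hb2 : M (min r (τ n ω)) ω ≤ L := by rw [h2]; exact (hBsub ω hω).le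
      have hb2' : 0 ≤ M (min r (τ n ω)) ω := hnonneg _ ω
      simp only [hh, Real.norm_eq_abs]
      rw [abs_le]
      constructor <;> nlinarith
    · have h1 : min (V ω) (τ n ω) = τ n ω :=
        min_eq_right ((hlt.le.trans (le_hitT hrs ω)))
      have h2 : min r (τ n ω) = τ n ω := min_eq_right hlt.le
      simp only [hh, h1, h2, sub_self, norm_zero]
      positivity
  have hDCT : Tendsto (fun n => ∫ ω in B, h n ω ∂μ) atTop
      (nhds (∫ ω in B, (M (V ω) ω - M r ω) ∂μ)) := by
    refine tendsto_integral_of_dominated_convergence (fun _ => 2 * L)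
      (fun n => (hmeas1 n).restrict) (integrable_const _) hbound ?_
    exact Eventually.of_forall fun ω => hlimh ω
  have hz : ∫ ω in B, (M (V ω) ω - M r ω) ∂μ = 0 := by
    have := hDCT
    simp only [hzero] at this
    exact tendsto_nhds_unique this tendsto_const_nhds
  -- split the integral
  have hVmeas : Measurable (fun ω => M (V ω) ω) :=
    (measurable_stoppedValue hprogM hVst).mono (hVst.measurableSpace_le_of_le hVle') le_rfl
  have hint1 : IntegrableOn (fun ω => M (V ω) ω) B μ := by
    refine Integrable.mono' (integrable_const L) hVmeas.aestronglyMeasurable.restrict ?_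
    rw [ae_restrict_iff' hBm]
    refine Eventually.of_forall fun ω hω => ?_
    rw [Real.norm_eq_abs, abs_of_nonneg (hnonneg _ ω)]
    exact hitT_bound hcont hrs ω (hBsub ω hω) (le_hitT hrs ω) le_rfl
  have hint2 : IntegrableOn (M r) B μ := by
    refine Integrable.mono' (integrable_const L)
      (((hadp r).mono (ℱ.le r) le_rfl).aestronglyMeasurable).restrict ?_
    rw [ae_restrict_iff' hBm]
    refine Eventually.of_forall fun ω hω => ?_
    rw [Real.norm_eq_abs, abs_of_nonneg (hnonneg _ ω)]
    exact (hBsub ω hω).le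
  rw [integral_sub hint1 hint2] at hz
  linarith

set_option maxHeartbeats 1000000 in
/-- The hitting identity: `L·P(B ∩ {M hits [L,∞) after r}) = ∫_B min(M r, L)` for `B ∈ ℱ r`. -/
theorem hitting_identity
    (ℱ : Filtration ℝ≥0 m) (μ : Measure Ω) [IsProbabilityMeasure μ]
    (M : ℝ≥0 → Ω → ℝ) (hadp : Adapted ℱ M)
    (hcont : ∀ ω, Continuous fun t => M t ω) (hnonneg : ∀ t ω, 0 ≤ M t ω)
    (hlim : ∀ᵐ ω ∂μ, Tendsto (fun t => M t ω) atTop (nhds 0))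
    (τ : ℕ → Ω → ℝ≥0) (hτst : ∀ n, IsStoppingTime ℱ (fun ω => ((τ n ω : ℝ≥0) : WithTop ℝ≥0)))
    (hτtend : ∀ ω, Tendsto (fun n => τ n ω) atTop atTop)
    (hτmart : ∀ n, Martingale
      (MeasureTheory.stoppedProcess M (fun ω => ((τ n ω : ℝ≥0) : WithTop ℝ≥0))) ℱ μ)
    {L : ℝ} (hL : 0 < L) (r : ℝ≥0) {B : Set Ω} (hB : MeasurableSet[ℱ r] B) :
    L * (μ (B ∩ {ω | ∃ u, r ≤ u ∧ L ≤ M u ω})).toReal = ∫ ω in B, min (M r ω) L ∂μ := by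
  classical
  set H := {ω : Ω | ∃ u, r ≤ u ∧ L ≤ M u ω} with hH
  have hBm : MeasurableSet B := ℱ.le r _ hB
  have hHmeas : MeasurableSet H := by
    have hunion : H = ⋃ k : ℕ, {ω | ∃ u, r ≤ u ∧ u ≤ r + k ∧ L ≤ M u ω} := by
      ext ω
      simp only [hH, mem_setOf_eq, mem_iUnion]
      constructor
      · rintro ⟨u, h1, h2⟩
        refine ⟨⌈(u : ℝ≥0)⌉₊, u, h1, ?_, h2⟩
        calc u ≤ (⌈(u : ℝ≥0)⌉₊ : ℝ≥0) := Nat.le_ceil u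
          _ ≤ r + (⌈(u : ℝ≥0)⌉₊ : ℝ≥0) := le_add_self
      · rintro ⟨k, u, h1, _, h3⟩
        exact ⟨u, h1, h3⟩
    rw [hunion]
    exact MeasurableSet.iUnion fun k =>
      ℱ.le _ _ (measurableSet_hit ℱ M hadp hcont L le_self_add)
  set B1 := B ∩ {ω | M r ω < L} with hB1
  set B2 := B ∩ {ω | L ≤ M r ω} with hB2
  have hB1meas : MeasurableSet[ℱ r] B1 :=
    hB.inter (measurableSet_lt (hadp r) measurable_const)
  have hB2meas : MeasurableSet[ℱ r] B2 :=
    hB.inter (measurableSet_le measurable_const (hadp r))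
  have hB1m : MeasurableSet B1 := ℱ.le r _ hB1meas
  have hB2m : MeasurableSet B2 := ℱ.le r _ hB2meas
  -- step: ∫_{B1} M r = L * μ(B1 ∩ H)
  have hWs : ∀ k : ℕ, ∫ ω in B1, M (hitT M L r (r + k) ω) ω ∂μ = ∫ ω in B1, M r ω ∂μ :=
    fun k => setIntegral_stoppedValue_hitT ℱ μ M hadp hcont hnonneg τ hτst hτtend hτmart hL
      le_self_add hB1meas (fun ω hω => hω.2)
  have hprogM : IsStronglyProgressive ℱ M :=
    StronglyAdapted.isStronglyProgressive_of_continuous (fun t => (hadp t).stronglyMeasurable) hcont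
  have hstep : ∫ ω in B1, M r ω ∂μ = ∫ ω in B1, H.indicator (fun _ => L) ω ∂μ := by
    have hDCT : Tendsto (fun k : ℕ => ∫ ω in B1, M (hitT M L r (r + k) ω) ω ∂μ) atTop
        (nhds (∫ ω in B1, H.indicator (fun _ => L) ω ∂μ)) := by
      refine tendsto_integral_of_dominated_convergence (fun _ => L) ?_ (integrable_const _)
        ?_ ?_
      · intro k
        have hVk : IsStoppingTime ℱ (fun ω => ((hitT M L r (r + k) ω : ℝ≥0) : WithTop ℝ≥0)) :=
          isStoppingTime_hitT ℱ hadp hcont le_self_add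
        exact (((measurable_stoppedValue hprogM hVk).mono
          (hVk.measurableSpace_le_of_le (fun ω => WithTop.coe_le_coe.mpr (hitT_le_s ω)))
          le_rfl).aestronglyMeasurable).restrict
      · intro k
        rw [ae_restrict_iff' hB1m]
        refine Eventually.of_forall fun ω hω => ?_
        rw [Real.norm_eq_abs, abs_of_nonneg (hnonneg _ ω)]
        exact hitT_bound hcont le_self_add ω hω.2 (le_hitT le_self_add ω) le_rfl
      · rw [ae_restrict_iff' hB1m]
        filter_upwards [hlim] with ω hMto hωB1
        by_cases hωH : ω ∈ H
        · obtain ⟨u₀, hu1, hu2⟩ := id hωH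
          have hev : ∀ᶠ k : ℕ in atTop, M (hitT M L r (r + k) ω) ω = L := by
            rw [eventually_atTop]
            refine ⟨⌈(u₀ : ℝ≥0)⌉₊, fun k hk => ?_⟩
            have huk : u₀ ≤ r + (k : ℝ≥0) := by
              calc u₀ ≤ (⌈(u₀ : ℝ≥0)⌉₊ : ℝ≥0) := Nat.le_ceil u₀
                _ ≤ (k : ℝ≥0) := by exact_mod_cast hk
                _ ≤ r + (k : ℝ≥0) := le_add_self
            have hVle : hitT M L r (r + k) ω ≤ u₀ := hitT_le_of_mem ω hu1 huk hu2
            have hub : M (hitT M L r (r + k) ω) ω ≤ L :=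
              hitT_bound hcont le_self_add ω hωB1.2 (le_hitT le_self_add ω) le_rfl
            have hlb : L ≤ M (hitT M L r (r + k) ω) ω := by
              rcases hitT_mem hcont (M := M) (L := L) (r := r) (s := r + k) ω with hmem | hmem
              · exact hmem.2.2
              · rw [mem_singleton_iff] at hmem
                have : hitT M L r (r + k) ω = u₀ :=
                  le_antisymm hVle (by rw [hmem]; exact huk)
                rw [this]; exact hu2
            linarith
          have hind : H.indicator (fun _ => L) ω = L := by
            simp [Set.indicator_of_mem hωH]
          rw [hind]
          refine Tendsto.congr' ?_ tendsto_const_nhds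
          filter_upwards [hev] with k hk
          exact hk.symm
        · have hempty : ∀ k : ℕ, hitT M L r (r + k) ω = r + k := by
            intro k
            have hset : {u | r ≤ u ∧ u ≤ r + (k : ℝ≥0) ∧ L ≤ M u ω} = ∅ := by
              ext u
              simp only [mem_setOf_eq, mem_empty_iff_false, iff_false, not_and]
              intro h1 _ h3
              exact absurd ⟨u, h1, h3⟩ hωH
            rw [hitT, hset, empty_union, csInf_singleton]
          have hind : H.indicator (fun _ => L) ω = 0 := by
            simp [Set.indicator_of_notMem hωH]
          rw [hind]
          have htt : Tendsto (fun k : ℕ => r + (k : ℝ≥0)) atTop atTop :=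
            tendsto_atTop_mono (fun k => le_add_self) (tendsto_natCast_atTop_atTop (R := ℝ≥0))
          have := hMto.comp htt
          refine Tendsto.congr' ?_ this
          refine Eventually.of_forall fun k => ?_
          simp only [Function.comp_apply, hempty k]
    have heq : (fun k : ℕ => ∫ ω in B1, M (hitT M L r (r + k) ω) ω ∂μ)
        = fun _ => ∫ ω in B1, M r ω ∂μ := funext hWs
    rw [heq] at hDCT
    exact tendsto_nhds_unique tendsto_const_nhds hDCT
  have hindint : ∫ ω in B1, H.indicator (fun _ => L) ω ∂μ = L * (μ (B1 ∩ H)).toReal := by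
    rw [setIntegral_indicator hHmeas, setIntegral_const, smul_eq_mul, mul_comm]; rfl
  -- combine
  have hmin_int : Integrable (fun ω => min (M r ω) L) μ := by
    refine Integrable.mono' (integrable_const L)
      ((((hadp r).mono (ℱ.le r) le_rfl).min measurable_const).aestronglyMeasurable) ?_
    refine Eventually.of_forall fun ω => ?_
    rw [Real.norm_eq_abs, abs_of_nonneg (le_min (hnonneg r ω) hL.le)]
    exact min_le_right _ _
  have hBsplit : B = B1 ∪ B2 := by
    ext ω
    simp only [hB1, hB2, mem_union, mem_inter_iff, mem_setOf_eq]
    constructor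
    · intro hω
      rcases lt_or_ge (M r ω) L with hc | hc
      · exact Or.inl ⟨hω, hc⟩
      · exact Or.inr ⟨hω, hc⟩
    · rintro (⟨hω, _⟩ | ⟨hω, _⟩) <;> exact hω
  have hdisj : Disjoint B1 B2 := by
    refine Set.disjoint_left.mpr fun ω h1 h2 => ?_
    have hx1 : M r ω < L := h1.2
    have hx2 : L ≤ M r ω := h2.2
    exact absurd hx2 (not_le.mpr hx1)
  have hB2H : B2 ⊆ H := fun ω hω => ⟨r, le_rfl, hω.2⟩
  have hHsplit : B ∩ H = (B1 ∩ H) ∪ B2 := by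
    rw [hBsplit, Set.union_inter_distrib_right]
    congr 1
    exact Set.inter_eq_left.mpr hB2H
  have hdisj2 : Disjoint (B1 ∩ H) B2 := hdisj.mono_left Set.inter_subset_left
  have hmeasure : (μ (B ∩ H)).toReal = (μ (B1 ∩ H)).toReal + (μ B2).toReal := by
    rw [hHsplit, measure_union hdisj2 hB2m, ENNReal.toReal_add (measure_ne_top μ _)
      (measure_ne_top μ _)]
  have hRHS : ∫ ω in B, min (M r ω) L ∂μ
      = ∫ ω in B1, M r ω ∂μ + L * (μ B2).toReal := by
    rw [hBsplit, setIntegral_union hdisj hB2m hmin_int.integrableOn hmin_int.integrableOn]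
    congr 1
    · refine setIntegral_congr_fun hB1m fun ω hω => ?_
      exact min_eq_left hω.2.le
    · rw [show ∫ ω in B2, min (M r ω) L ∂μ = ∫ _ in B2, L ∂μ from
        setIntegral_congr_fun hB2m fun ω hω => min_eq_right hω.2]
      rw [setIntegral_const, smul_eq_mul, mul_comm]; rfl
  rw [hRHS, hstep, hindint, hmeasure]
  ring

end BSLP

open BSLP in
set_option maxHeartbeats 1000000 in
/-- If `M` is a continuous nonnegative local martingale on a filtered
probability space satisfying the usual conditions, with `M_t → 0` a.s., and `K ≥ 0`, then for
`g_K = sup {t : M_t = K}` (with `sup ∅ = 0`) one has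
`(K − M_t)⁺ = K · P(g_K ≤ t | F_t)` a.s. for every `t ≥ 0`. -/
theorem blackScholes_last_passage {Ω : Type*} [m : MeasurableSpace Ω]
    (ℱ : Filtration ℝ≥0 m) (μ : Measure Ω) [IsProbabilityMeasure μ]
    -- usual conditions: completeness and right-continuity
    (hcomplete : ∀ A : Set Ω, (∃ B : Set Ω, MeasurableSet B ∧ A ⊆ B ∧ μ B = 0) →
      MeasurableSet[ℱ 0] A)
    (hright : ∀ t : ℝ≥0, (ℱ t : MeasurableSpace Ω)
      = ⨅ u : ℝ≥0, ⨅ _ : t < u, (ℱ u : MeasurableSpace Ω))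
    (M : ℝ≥0 → Ω → ℝ)
    (hadp : Adapted ℱ M)
    (hloc : IsLocalMartingale ℱ μ M)
    (hcont : ∀ ω, Continuous fun t => M t ω)
    (hnonneg : ∀ t ω, 0 ≤ M t ω)
    (hlim : ∀ᵐ ω ∂μ, Tendsto (fun t => M t ω) atTop (nhds 0))
    (K : ℝ) (hK : 0 ≤ K)
    (gK : Ω → ℝ≥0∞)
    (hgK : ∀ ω, gK ω = sSup {s : ℝ≥0∞ | ∃ u : ℝ≥0, s = (u : ℝ≥0∞) ∧ M u ω = K}) :
    ∀ t : ℝ≥0,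
      (fun ω => max (K - M t ω) 0) =ᵐ[μ]
        fun ω => K *
          (μ[({ω' | gK ω' ≤ (t : ℝ≥0∞)}).indicator (fun _ => (1 : ℝ)) | ℱ t]) ω := by
  classical
  intro t
  obtain ⟨τ, hτst, hτtend, hτmart⟩ := hloc
  by_cases hK0 : K = 0
  · subst hK0
    refine Eventually.of_forall fun ω => ?_
    simp only [zero_mul]
    exact max_eq_right (by linarith [hnonneg t ω])
  have hKpos : 0 < K := lt_of_le_of_ne hK (Ne.symm hK0)
  set tk : ℕ → ℝ≥0 := fun k => t + ((k : ℝ≥0) + 1)⁻¹ with htk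
  set Hk : ℕ → Set Ω := fun k => {ω | ∃ u, tk k ≤ u ∧ K ≤ M u ω} with hHk
  set G := ⋃ k, Hk k with hG
  have htk_le : ∀ k, t ≤ tk k := fun k => le_self_add
  have htk_anti : ∀ j k : ℕ, j ≤ k → tk k ≤ tk j := by
    intro j k hjk
    refine add_le_add_right ?_ t
    have h1 : ((j : ℝ≥0) + 1) ≤ ((k : ℝ≥0) + 1) := by
      have h2 : (j : ℝ≥0) ≤ (k : ℝ≥0) := by exact_mod_cast hjk
      exact add_le_add_left h2 1
    exact inv_anti₀ (by positivity) h1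
  have htk_lt : ∀ k, t < tk k := fun k => lt_add_of_pos_right t (by positivity)
  have hHk_meas : ∀ k, MeasurableSet (Hk k) := by
    intro k
    have hunion : Hk k = ⋃ n : ℕ, {ω | ∃ u, tk k ≤ u ∧ u ≤ tk k + n ∧ K ≤ M u ω} := by
      ext ω
      simp only [hHk, mem_setOf_eq, mem_iUnion]
      constructor
      · rintro ⟨u, h1, h2⟩
        refine ⟨⌈(u : ℝ≥0)⌉₊, u, h1, ?_, h2⟩
        calc u ≤ (⌈(u : ℝ≥0)⌉₊ : ℝ≥0) := Nat.le_ceil u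
          _ ≤ tk k + (⌈(u : ℝ≥0)⌉₊ : ℝ≥0) := le_add_self
      · rintro ⟨n, u, h1, _, h3⟩
        exact ⟨u, h1, h3⟩
    rw [hunion]
    exact MeasurableSet.iUnion fun n =>
      ℱ.le _ _ (measurableSet_hit ℱ M hadp hcont K le_self_add)
  have hGmeas : MeasurableSet G := MeasurableSet.iUnion fun k => hHk_meas k
  have hHmono : Monotone Hk := by
    intro j k hjk ω hω
    obtain ⟨u, h1, h2⟩ := hω
    exact ⟨u, (htk_anti j k hjk).trans h1, h2⟩
  -- a.e. identification of the events
  have haeiff : ∀ᵐ ω ∂μ, (gK ω ≤ (t : ℝ≥0∞) ↔ ω ∉ G) := by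
    filter_upwards [hlim] with ω hMto
    rw [hgK ω]
    constructor
    · intro hsup
      have hall : ∀ u : ℝ≥0, M u ω = K → u ≤ t := by
        intro u hu
        have h1 : (u : ℝ≥0∞) ≤ (t : ℝ≥0∞) :=
          le_trans (le_sSup (show (u : ℝ≥0∞) ∈
            {s : ℝ≥0∞ | ∃ u' : ℝ≥0, s = (u' : ℝ≥0∞) ∧ M u' ω = K} from ⟨u, rfl, hu⟩)) hsup
        exact_mod_cast h1
      intro hωG
      rw [hG, mem_iUnion] at hωG
      obtain ⟨k, u, hu1, hu2⟩ := hωG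
      have htu : t < u := lt_of_lt_of_le (htk_lt k) hu1
      rcases eq_or_lt_of_le hu2 with heq | hlt
      · exact absurd (hall u heq.symm) (not_le.mpr htu)
      · -- M u ω > K : find a later time where M = K by IVT
        have hev : ∀ᶠ v in (atTop : Filter ℝ≥0), M v ω < K :=
          hMto.eventually (Filter.Tendsto.eventually_lt_const hKpos tendsto_id) |>.mono (fun _ h => h)
        obtain ⟨w, hw1, hw2⟩ := ((hev).and (eventually_ge_atTop u)).exists
        have hKmem : K ∈ Icc (M w ω) (M u ω) := ⟨hw1.le, hlt.le⟩
        obtain ⟨v, hv, hvK⟩ := intermediate_value_Icc' hw2 (hcont ω).continuousOn hKmem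
        have hvt : t < v := lt_of_lt_of_le htu hv.1
        exact absurd (hall v hvK) (not_le.mpr hvt)
    · intro hnG
      refine sSup_le ?_
      rintro s' ⟨u, rfl, hu⟩
      rw [ENNReal.coe_le_coe]
      by_contra hut
      push_neg at hut
      have hdiff : (0 : ℝ≥0) < u - t := tsub_pos_of_lt hut
      set k := ⌈(u - t)⁻¹⌉₊ with hk
      have hinv : ((k : ℝ≥0) + 1)⁻¹ ≤ u - t := by
        have h1 : (u - t)⁻¹ ≤ (k : ℝ≥0) + 1 := (Nat.le_ceil _).trans le_self_add
        calc ((k : ℝ≥0) + 1)⁻¹ ≤ ((u - t)⁻¹)⁻¹ := inv_anti₀ (by positivity) h1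
          _ = u - t := inv_inv _
      have htku : tk k ≤ u := by
        calc tk k = t + ((k : ℝ≥0) + 1)⁻¹ := rfl
          _ ≤ t + (u - t) := add_le_add_right hinv t
          _ = u := add_tsub_cancel_of_le hut.le
      exact hnG (mem_iUnion.mpr ⟨k, u, htku, hu.ge⟩)
  -- indicators a.e. equal
  have haeind : ({ω' | gK ω' ≤ (t : ℝ≥0∞)}).indicator (fun _ => (1 : ℝ))
      =ᵐ[μ] (Gᶜ).indicator (fun _ => (1 : ℝ)) := by
    filter_upwards [haeiff] with ω hiff
    by_cases hω : gK ω ≤ (t : ℝ≥0∞)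
    · have hm1 : ω ∈ {ω' | gK ω' ≤ (t : ℝ≥0∞)} := hω
      have hm2 : ω ∈ Gᶜ := hiff.mp hω
      rw [Set.indicator_of_mem hm1, Set.indicator_of_mem hm2]
    · have hm1 : ω ∉ {ω' | gK ω' ≤ (t : ℝ≥0∞)} := hω
      have hm2 : ω ∉ Gᶜ := fun hc => hω (hiff.mpr hc)
      rw [Set.indicator_of_notMem hm1, Set.indicator_of_notMem hm2]
  -- the candidate conditional expectation
  set F : Ω → ℝ := fun ω => max (K - M t ω) 0 / K with hF
  have hmin_int : Integrable (fun ω => min (M t ω) K) μ := by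
    refine Integrable.mono' (integrable_const K)
      ((((hadp t).mono (ℱ.le t) le_rfl).min measurable_const).aestronglyMeasurable) ?_
    refine Eventually.of_forall fun ω => ?_
    rw [Real.norm_eq_abs, abs_of_nonneg (le_min (hnonneg t ω) hKpos.le)]
    exact min_le_right _ _
  have hmax_eq : ∀ ω, F ω = 1 - min (M t ω) K / K := by
    intro ω
    simp only [hF]
    rcases le_total (M t ω) K with hc | hc
    · rw [min_eq_left hc, max_eq_left (by linarith)]
      field_simp
    · rw [min_eq_right hc, max_eq_right (by linarith)]
      field_simp; ring
  have hkey : F =ᵐ[μ] μ[(Gᶜ).indicator (fun _ => (1 : ℝ)) | ℱ t] := by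
    refine ae_eq_condExp_of_forall_setIntegral_eq (ℱ.le t)
      ((integrable_const (1 : ℝ)).indicator hGmeas.compl) ?_ ?_ ?_
    · -- IntegrableOn F
      intro s _ _
      refine Integrable.integrableOn ?_
      refine Integrable.mono' (integrable_const 1) ?_ ?_
      · have hsm : StronglyMeasurable F := by
          have h1 : Measurable (fun ω => M t ω) := ((hadp t).mono (ℱ.le t) le_rfl)
          exact (((measurable_const.sub h1).max measurable_const).div
            measurable_const).stronglyMeasurable
        exact hsm.aestronglyMeasurable
      · refine Eventually.of_forall fun ω => ?_
        have h0 : (0 : ℝ) ≤ max (K - M t ω) 0 := le_max_right _ _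
        have h1 : max (K - M t ω) 0 ≤ K := by
          rw [max_le_iff]
          exact ⟨by linarith [hnonneg t ω], hKpos.le⟩
        simp only [hF]
        rw [Real.norm_eq_abs, abs_of_nonneg (by positivity)]
        rw [div_le_one hKpos]
        exact h1
    · -- set integral identity
      intro s hs _
      have hsm : MeasurableSet s := ℱ.le t _ hs
      have hR : ∫ ω in s, (Gᶜ).indicator (fun _ => (1 : ℝ)) ω ∂μ = (μ (s ∩ Gᶜ)).toReal := by
        rw [setIntegral_indicator hGmeas.compl, setIntegral_const, smul_eq_mul, mul_one]; rfl
      have hsplit : (μ (s ∩ Gᶜ)).toReal = (μ s).toReal - (μ (s ∩ G)).toReal := by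
        have h1 : μ (s ∩ G) + μ (s \ G) = μ s := measure_inter_add_diff s hGmeas
        have h2 : (μ (s ∩ G)).toReal + (μ (s \ G)).toReal = (μ s).toReal := by
          rw [← ENNReal.toReal_add (measure_ne_top μ _) (measure_ne_top μ _), h1]
        have h3 : s ∩ Gᶜ = s \ G := (Set.diff_eq s G).symm
        rw [h3]
        linarith
      have hlimit : K * (μ (s ∩ G)).toReal = ∫ ω in s, min (M t ω) K ∂μ := by
        have hid : ∀ k, K * (μ (s ∩ Hk k)).toReal = ∫ ω in s, min (M (tk k) ω) K ∂μ :=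
          fun k => hitting_identity ℱ μ M hadp hcont hnonneg hlim τ hτst hτtend hτmart
            hKpos (tk k) (ℱ.mono (htk_le k) _ hs)
        have hmono2 : Monotone fun k => s ∩ Hk k :=
          fun j k h => inter_subset_inter_right s (hHmono h)
        have hmt : Tendsto (fun k => μ (s ∩ Hk k)) atTop (nhds (μ (s ∩ G))) := by
          have h4 := tendsto_measure_iUnion_atTop (μ := μ) hmono2
          rwa [← inter_iUnion] at h4
        have hmt' : Tendsto (fun k => K * (μ (s ∩ Hk k)).toReal) atTop
            (nhds (K * (μ (s ∩ G)).toReal)) :=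
          (((ENNReal.tendsto_toReal (measure_ne_top μ _)).comp hmt).const_mul K)
        have hDCT : Tendsto (fun k => ∫ ω in s, min (M (tk k) ω) K ∂μ) atTop
            (nhds (∫ ω in s, min (M t ω) K ∂μ)) := by
          refine tendsto_integral_of_dominated_convergence (fun _ => K) ?_
            (integrable_const _) ?_ ?_
          · intro k
            exact ((((hadp (tk k)).mono (ℱ.le _) le_rfl).min
              measurable_const).aestronglyMeasurable).restrict
          · intro k
            refine Eventually.of_forall fun ω => ?_
            rw [Real.norm_eq_abs, abs_of_nonneg (le_min (hnonneg _ ω) hKpos.le)]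
            exact min_le_right _ _
          · refine Eventually.of_forall fun ω => ?_
            have h0 : Tendsto (fun k : ℕ => ((k : ℝ≥0) + 1)⁻¹) atTop (nhds 0) := by
              rw [← NNReal.tendsto_coe]
              simp only [NNReal.coe_inv, NNReal.coe_add, NNReal.coe_natCast, NNReal.coe_one,
                NNReal.coe_zero]
              exact tendsto_inv_atTop_zero.comp
                (tendsto_atTop_add_const_right atTop 1 tendsto_natCast_atTop_atTop)
            have htkt : Tendsto tk atTop (nhds t) := by
              have h6 := (tendsto_const_nhds (α := ℕ) (f := atTop) (x := t)).add h0
              simpa using h6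
            exact Tendsto.min (((hcont ω).tendsto t).comp htkt) tendsto_const_nhds
        have heq2 : (fun k => K * (μ (s ∩ Hk k)).toReal)
            = fun k => ∫ ω in s, min (M (tk k) ω) K ∂μ := funext hid
        rw [heq2] at hmt'
        exact tendsto_nhds_unique hmt' hDCT
      calc ∫ ω in s, F ω ∂μ = ∫ ω in s, (1 - min (M t ω) K / K) ∂μ :=
            integral_congr_ae (Eventually.of_forall fun ω => hmax_eq ω)
        _ = (μ s).toReal - (∫ ω in s, min (M t ω) K ∂μ) / K := by
            rw [integral_sub (integrable_const 1).restrict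
              ((hmin_int.div_const K).restrict)]
            rw [setIntegral_const, smul_eq_mul, mul_one, integral_div]; rfl
        _ = (μ s).toReal - (μ (s ∩ G)).toReal := by
            rw [← hlimit]
            field_simp
        _ = ∫ ω in s, (Gᶜ).indicator (fun _ => (1 : ℝ)) ω ∂μ := by rw [hR, hsplit]
    · -- measurability of F w.r.t. ℱ t
      refine StronglyMeasurable.aestronglyMeasurable ?_
      have h1m : Measurable[ℱ t] (M t) := (hadp t)
      have h4 : Measurable[ℱ t] F :=
        ((measurable_const.sub h1m).max measurable_const).div measurable_const
      exact h4.stronglyMeasurable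
  have hcond : μ[({ω' | gK ω' ≤ (t : ℝ≥0∞)}).indicator (fun _ => (1 : ℝ)) | ℱ t]
      =ᵐ[μ] μ[(Gᶜ).indicator (fun _ => (1 : ℝ)) | ℱ t] := condExp_congr_ae haeind
  filter_upwards [hkey, hcond] with ω h1 h2
  rw [h2, ← h1]
  simp only [hF]
  rw [mul_comm, div_mul_cancel₀ _ (ne_of_gt hKpos)]
end
end

section
/- On the Wiener space C(ℝ_+, ℝ) with the filtration generated by the canonical process, suppose the usual conditions hold (i.e., every P-null set of F lies in F_0). Then there exists no σ-finite measure Q on (Ω, F) such that Q[Λ_t ∩ {g ≤ t}] = E_W[1_{Λ_t} |X_t|] for all t ≥ 0 and Λ_t ∈ F_t, where g = sup{t ≥ 0 : X_t = 0}. (Proof idea: under W, {g > t} has probability one, hence lies in F_t by completeness; applying the identity with Λ_t = {g > t} forces E_W[|X_t|] = 0, a contradiction.) -/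
open MeasureTheory Filter Set
open scoped NNReal ENNReal

noncomputable section

/-- On the Wiener space with the completed (usual-conditions) natural
filtration of the canonical process `X` under the Wiener measure `μ`, where the last zero `g`
of `X` is a.s. infinite (so `μ(g > t) = 1` for all `t`) while `E[|X_t|] > 0` for `t > 0`,
there is no σ-finite measure `Q` with `Q(Λ_t ∩ {g ≤ t}) = E[1_{Λ_t} |X_t|]` for all `t` and
`Λ_t ∈ F_t`. -/
theorem no_Q_under_usual_conditions {Ω : Type*} [m : MeasurableSpace Ω]
    (ℱ : Filtration ℝ≥0 m) (μ : Measure Ω) [IsProbabilityMeasure μ]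
    -- completeness: every μ-null set of F lies in F_0
    (hcomplete : ∀ A : Set Ω, MeasurableSet A → μ A = 0 → MeasurableSet[ℱ 0] A)
    (X : ℝ≥0 → Ω → ℝ)
    (hadp : Adapted ℱ X)
    (hcont : ∀ ω, Continuous fun t => X t ω)
    (hint : ∀ t : ℝ≥0, Integrable (X t) μ)
    (g : Ω → ℝ≥0∞)
    (hg : ∀ ω, g ω = sSup {s : ℝ≥0∞ | ∃ u : ℝ≥0, s = (u : ℝ≥0∞) ∧ X u ω = 0})
    (hgmeas : ∀ t : ℝ≥0, MeasurableSet {ω | g ω ≤ (t : ℝ≥0∞)})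
    -- under the Wiener measure the last zero is a.s. infinite
    (hginf : ∀ t : ℝ≥0, μ {ω | (t : ℝ≥0∞) < g ω} = 1)
    (hpos : ∀ t : ℝ≥0, 0 < t → 0 < ∫ ω, |X t ω| ∂μ) :
    ¬ ∃ Q : Measure Ω, SigmaFinite Q ∧
      ∀ t : ℝ≥0, ∀ A : Set Ω, MeasurableSet[ℱ t] A →
        Q (A ∩ {ω | g ω ≤ (t : ℝ≥0∞)}) = ENNReal.ofReal (∫ ω in A, |X t ω| ∂μ) := by
  rintro ⟨Q, _, hQ⟩
  set B : Set Ω := {ω | g ω ≤ (1 : ℝ≥0∞)} with hB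
  have hBmeas : MeasurableSet B := hgmeas 1
  have hBnull : μ B = 0 := by
    have h1 : μ {ω | (1 : ℝ≥0∞) < g ω} = 1 := by simpa using hginf 1
    have hcompl : Bᶜ = {ω | (1 : ℝ≥0∞) < g ω} := by
      ext ω; simp [hB, not_le]
    have := measure_compl hBmeas (measure_ne_top μ B)
    rw [hcompl, h1, measure_univ] at this
    have hle : μ B ≤ 1 := prob_le_one
    have := this
    -- 1 = 1 - μ B, and μ B ≤ 1, so μ B = 0
    have hsub : (1 : ℝ≥0∞) - μ B = 1 := this.symm
    by_contra hne
    have hpos' : 0 < μ B := pos_iff_ne_zero.mpr hne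
    have : (1 : ℝ≥0∞) - μ B < 1 := ENNReal.sub_lt_self ENNReal.one_ne_top (by simp) hne
    rw [hsub] at this
    exact lt_irrefl _ this
  have hA0 : MeasurableSet[ℱ 0] Bᶜ := by
    have hB0 : MeasurableSet[ℱ 0] B := hcomplete B hBmeas hBnull
    exact hB0.compl
  have hA1 : MeasurableSet[ℱ 1] Bᶜ := ℱ.mono zero_le_one _ hA0
  have hkey := hQ 1 Bᶜ hA1
  simp only [ENNReal.coe_one] at hkey
  have hempty : Bᶜ ∩ B = ∅ := by
    ext ω; simp
  rw [hempty] at hkey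
  simp only [measure_empty] at hkey
  have hint0 : ∫ ω in Bᶜ, |X 1 ω| ∂μ ≤ 0 := by
    by_contra hlt
    push_neg at hlt
    have := ENNReal.ofReal_pos.mpr hlt
    rw [← hkey] at this
    exact lt_irrefl _ this
  have heq : ∫ ω in Bᶜ, |X 1 ω| ∂μ = ∫ ω, |X 1 ω| ∂μ := by
    have hae : (Bᶜ : Set Ω) =ᵐ[μ] (Set.univ : Set Ω) := by
      rw [ae_eq_set]
      constructor
      · simpa using measure_mono_null (Set.diff_subset) hBnull
      · have : Set.univ \ Bᶜ = B := by ext ω; simp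
        rw [this]; exact hBnull
    rw [setIntegral_congr_set hae, setIntegral_univ]
  rw [heq] at hint0
  exact absurd (hpos 1 one_pos) (not_lt.mpr hint0)
end
end

section
/- Under the assumptions of the main existence theorem, if moreover the submartingale (X_t)_{t≥0} is uniformly integrable, then X_t converges a.s. to a limit X_∞ and the measure Q is absolutely continuous with respect to P with density X_∞: Q = X_∞ · P. Moreover, a nonnegative functional F is Q-integrable iff F·X_∞ is P-integrable, and in that case M_t(F) is a càdlàg version of E_P[F X_∞ | F_t], which converges a.s. and in L¹ to F X_∞. -/
open MeasureTheory Filter Set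
open scoped NNReal ENNReal

noncomputable section
/-- `A` is N-negligible: it is covered by a countable union of sets `B n ∈ F_n` of measure zero. -/
def NNegG {Ω : Type*} (ℱ : ℝ≥0 → MeasurableSpace Ω) (ν : Set Ω → ℝ≥0∞) (A : Set Ω) : Prop :=
  ∃ B : ℕ → Set Ω, (∀ n : ℕ, MeasurableSet[ℱ (n : ℝ≥0)] (B n)) ∧ (∀ n, ν (B n) = 0) ∧
    A ⊆ ⋃ n, B n
/-- The class `(Σ)`: a nonnegative process `X = N + A` where `N` is càdlàg and adapted,
`A` is continuous, increasing, starting at zero, adapted, and the measure `dA` is carried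
by the zero set of `X` (i.e. `A` is constant on intervals where `X` does not vanish). -/
structure IsClassSigma {Ω : Type*} [m : MeasurableSpace Ω] (ℱ : Filtration ℝ≥0 m)
    (μ : Measure Ω) (X N A : ℝ≥0 → Ω → ℝ) : Prop where
  nonneg : ∀ t ω, 0 ≤ X t ω
  decomp : ∀ t ω, X t ω = N t ω + A t ω
  adaptedN : Adapted ℱ N
  adaptedA : Adapted ℱ A
  cadlagN : ∀ ω, ∀ t : ℝ≥0, ContinuousWithinAt (fun s => N s ω) (Set.Ici t) t
  leftLimN : ∀ ω, ∀ t : ℝ≥0, 0 < t →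
    ∃ l : ℝ, Tendsto (fun s => N s ω) (nhdsWithin t (Set.Iio t)) (nhds l)
  contA : ∀ ω, Continuous fun t => A t ω
  monoA : ∀ ω, Monotone fun t => A t ω
  zeroA : ∀ ω, A 0 ω = 0
  carried : ∀ ω, ∀ s t : ℝ≥0, s ≤ t → (∀ u : ℝ≥0, s ≤ u → u ≤ t → X u ω ≠ 0) → A s ω = A t ω
/-- Property (NP): the space satisfies the N-usual conditions, `F` is generated by the
filtration, and every coherent family of probability measures on `(F_t)`, locally absolutely
continuous with respect to `μ`, extends to `F`. -/
def PropertyNP {Ω : Type*} [m : MeasurableSpace Ω] (ℱ : Filtration ℝ≥0 m)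
    (μ : Measure Ω) : Prop :=
  (∀ A : Set Ω, NNegG (fun t => ℱ t) (fun s => μ s) A → MeasurableSet[ℱ 0] A) ∧
  (∀ t : ℝ≥0, (ℱ t : MeasurableSpace Ω)
      = ⨅ u : ℝ≥0, ⨅ _ : t < u, (ℱ u : MeasurableSpace Ω)) ∧
  (m = ⨆ t : ℝ≥0, (ℱ t : MeasurableSpace Ω)) ∧
  (∀ Q : ℝ≥0 → Measure Ω, (∀ t, IsProbabilityMeasure (Q t)) →
    (∀ s t : ℝ≥0, s ≤ t → ∀ A : Set Ω, MeasurableSet[ℱ s] A → Q t A = Q s A) →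
    (∀ t : ℝ≥0, ∀ A : Set Ω, MeasurableSet[ℱ t] A → μ A = 0 → Q t A = 0) →
    ∃ Qinf : Measure Ω, IsProbabilityMeasure Qinf ∧
      ∀ t : ℝ≥0, ∀ A : Set Ω, MeasurableSet[ℱ t] A → Qinf A = Q t A)
/-- `Q` is a σ-finite measure associated to the submartingale `X` and the last zero `g`:
`Q(g = ∞) = 0` and `Q[Γ_t 1_{g ≤ t}] = E_P[Γ_t X_t]` for every bounded `F_t`-measurable `Γ_t`. -/
def IsQMeasure {Ω : Type*} [m : MeasurableSpace Ω] (ℱ : Filtration ℝ≥0 m) (μ : Measure Ω)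
    (X : ℝ≥0 → Ω → ℝ) (g : Ω → ℝ≥0∞) (Q : Measure Ω) : Prop :=
  SigmaFinite Q ∧ Q {ω | g ω = ∞} = 0 ∧
    ∀ t : ℝ≥0, ∀ Γ : Ω → ℝ, Measurable[ℱ t] Γ → (∃ C, ∀ ω, |Γ ω| ≤ C) →
      ∫ ω, Γ ω * ({ω' | g ω' ≤ (t : ℝ≥0∞)}.indicator (fun _ => (1 : ℝ)) ω) ∂Q
        = ∫ ω, Γ ω * X t ω ∂μ
/-- `M` is the càdlàg martingale of local densities with respect to `μ` of the finite
measure `F · Q`. -/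
def IsDensityMartingale {Ω : Type*} [m : MeasurableSpace Ω] (ℱ : Filtration ℝ≥0 m)
    (μ Q : Measure Ω) (F : Ω → ℝ) (M : ℝ≥0 → Ω → ℝ) : Prop :=
  Martingale M ℱ μ ∧
  (∀ ω, ∀ t : ℝ≥0, ContinuousWithinAt (fun s => M s ω) (Set.Ici t) t) ∧
  (∀ ω, ∀ t : ℝ≥0, 0 < t →
    ∃ l : ℝ, Tendsto (fun s => M s ω) (nhdsWithin t (Set.Iio t)) (nhds l)) ∧
  ∀ t : ℝ≥0, ∀ Γ : Ω → ℝ, Measurable[ℱ t] Γ → (∃ C, ∀ ω, |Γ ω| ≤ C) →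
    ∫ ω, Γ ω * M t ω ∂μ = ∫ ω, Γ ω * F ω ∂Q

namespace SigmaAux

/-- a fixed countable dense sequence in `ℝ≥0`. -/
def q : ℕ → ℝ≥0 := TopologicalSpace.denseSeq ℝ≥0

lemma exists_q_right {F : ℝ≥0 → ℝ} {u : ℝ≥0} (hF : ContinuousWithinAt F (Set.Ici u) u)
    {ε : ℝ} (hε : 0 < ε) : ∃ k : ℕ, u < q k ∧ |F (q k) - F u| < ε := by
  have h1 : {s : ℝ≥0 | |F s - F u| < ε} ∈ nhdsWithin u (Set.Ici u) := by
    have := hF (Metric.ball_mem_nhds (F u) hε)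
    refine Filter.mem_of_superset this ?_
    intro s hs
    simpa [Metric.mem_ball, Real.dist_eq] using hs
  rw [mem_nhdsWithin] at h1
  obtain ⟨O, hO, huO, hsub⟩ := h1
  obtain ⟨δ, hδ, hball⟩ := Metric.isOpen_iff.1 hO u huO
  have hx : ∃ x : ℝ≥0, x ∈ O ∩ Set.Ioi u := by
    refine ⟨u + Real.toNNReal (δ / 2), ?_, ?_⟩
    · apply hball
      rw [Metric.mem_ball, NNReal.dist_eq]
      have : ((u + Real.toNNReal (δ / 2) : ℝ≥0) : ℝ) = (u : ℝ) + δ / 2 := by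
        push_cast [Real.coe_toNNReal _ (le_of_lt (half_pos hδ))]
        ring
      rw [this]
      simp only [add_sub_cancel_left]
      rw [abs_of_nonneg (le_of_lt (half_pos hδ))]
      linarith
    · simp only [Set.mem_Ioi]
      have : (0 : ℝ≥0) < Real.toNNReal (δ / 2) := by
        simp [Real.toNNReal_pos]; linarith
      exact lt_add_of_pos_right u this
  have hne : (O ∩ Set.Ioi u).Nonempty := hx
  have hopen : IsOpen (O ∩ Set.Ioi u) := hO.inter isOpen_Ioi
  obtain ⟨k, hk⟩ := (TopologicalSpace.denseRange_denseSeq ℝ≥0).exists_mem_open hopen hne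
  refine ⟨k, hk.2, ?_⟩
  exact hsub ⟨hk.1, Set.mem_Ici.2 (le_of_lt hk.2)⟩

lemma abs_le_of_dense {F : ℝ≥0 → ℝ} (hF : ∀ u : ℝ≥0, ContinuousWithinAt F (Set.Ici u) u)
    {n : ℝ≥0} {b : ℝ} (hb : ∀ k : ℕ, n ≤ q k → |F (q k)| ≤ b) :
    ∀ t : ℝ≥0, n ≤ t → |F t| ≤ b := by
  intro t ht
  by_contra hcon
  push_neg at hcon
  obtain ⟨k, hk1, hk2⟩ := exists_q_right (hF t) (show (0:ℝ) < |F t| - b by linarith)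
  have h3 := hb k (le_trans ht (le_of_lt hk1))
  have h4 : |F t| - |F (q k)| ≤ |F (q k) - F t| := by
    have h5 := abs_sub_abs_le_abs_sub (F t) (F (q k))
    rwa [abs_sub_comm (F t) (F (q k))] at h5
  linarith

lemma tendsto_full_of_monotone {f : ℝ≥0 → ℝ} (hf : Monotone f) {l : ℝ}
    (h : Tendsto (fun n : ℕ => f n) atTop (nhds l)) : Tendsto f atTop (nhds l) := by
  have hle : ∀ n : ℕ, f n ≤ l := by
    intro n
    refine ge_of_tendsto h ?_
    filter_upwards [eventually_ge_atTop n] with k hk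
    exact hf (by exact_mod_cast hk)
  rw [Metric.tendsto_atTop] at h ⊢
  intro ε hε
  obtain ⟨Nn, hN⟩ := h ε hε
  refine ⟨(Nn : ℝ≥0), fun t ht => ?_⟩
  obtain ⟨mm, hm⟩ := exists_nat_ge t
  have h1 : f Nn ≤ f t := hf ht
  have h2 : f t ≤ l := le_trans (hf hm) (hle mm)
  have h3 := hN Nn le_rfl
  rw [Real.dist_eq] at h3 ⊢
  rw [abs_lt] at h3 ⊢
  constructor <;> [linarith; linarith]

variable {Ω : Type*} [m : MeasurableSpace Ω]

lemma int_abs_eq {μ : Measure Ω} {f : Ω → ℝ} (hf : Integrable f μ) :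
    ∫ ω, |f ω| ∂μ = (eLpNorm f 1 μ).toReal := by
  rw [eLpNorm_one_eq_lintegral_enorm, ← integral_norm_eq_lintegral_enorm hf.aestronglyMeasurable]
  simp [Real.norm_eq_abs]

lemma eLpNorm_eq_ofReal_int_abs {μ : Measure Ω} {f : Ω → ℝ} (hf : Integrable f μ) :
    eLpNorm f 1 μ = ENNReal.ofReal (∫ ω, |f ω| ∂μ) := by
  rw [int_abs_eq hf, ENNReal.ofReal_toReal]
  rw [eLpNorm_one_eq_lintegral_enorm]
  exact hf.2.ne

lemma markov_real {μ : Measure Ω} [IsFiniteMeasure μ] {f : Ω → ℝ} (hf : Integrable f μ)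
    (hf0 : 0 ≤ᵐ[μ] f) {lam : ℝ} (hlam : 0 < lam) :
    μ {ω | lam < f ω} ≤ ENNReal.ofReal ((∫ ω, f ω ∂μ) / lam) := by
  have h1 : μ {ω | lam < f ω} ≤ μ {ω | lam ≤ f ω} :=
    measure_mono (fun ω (hω : lam < f ω) => le_of_lt hω)
  have h2 := mul_meas_ge_le_integral_of_nonneg hf0 hf lam
  have h3 : (μ {ω | lam ≤ f ω}).toReal ≤ (∫ ω, f ω ∂μ) / lam := by
    rw [le_div_iff₀ hlam, mul_comm]
    exact h2
  calc μ {ω | lam < f ω} ≤ μ {ω | lam ≤ f ω} := h1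
    _ = ENNReal.ofReal ((μ {ω | lam ≤ f ω}).toReal) := (ENNReal.ofReal_toReal (measure_ne_top _ _)).symm
    _ ≤ ENNReal.ofReal ((∫ ω, f ω ∂μ) / lam) := ENNReal.ofReal_le_ofReal h3

lemma maximal_finset (ℱ : Filtration ℝ≥0 m) (μ : Measure Ω) [IsFiniteMeasure μ]
    {d : Ω → ℝ} (hd : Integrable d μ) {lam : ℝ} (s : Finset ℝ≥0) :
    lam * (μ {ω | ∃ t ∈ s, lam < (μ[d | ℱ t]) ω}).toReal
      ≤ ∫ ω in {ω | ∃ t ∈ s, lam < (μ[d | ℱ t]) ω}, d ω ∂μ := by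
  classical
  induction s using Finset.induction_on_max with
  | empty => simp
  | insert a s ha ih =>
    have hWmeas : ∀ t : ℝ≥0, MeasurableSet[ℱ t] {ω | lam < (μ[d | ℱ t]) ω} := fun t =>
      measurableSet_lt measurable_const stronglyMeasurable_condExp.measurable
    set E : Set Ω := {ω | ∃ t ∈ s, lam < (μ[d | ℱ t]) ω} with hE
    have hEa : MeasurableSet[ℱ a] E := by
      have hEeq : E = ⋃ t ∈ s, {ω | lam < (μ[d | ℱ t]) ω} := by
        ext ω; simp [hE]
      rw [hEeq]
      exact MeasurableSet.biUnion s.countable_toSet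
        (fun t hts => ℱ.mono (le_of_lt (ha t hts)) _ (hWmeas t))
    have hEm : MeasurableSet E := ℱ.le a _ hEa
    set F : Set Ω := {ω | lam < (μ[d | ℱ a]) ω} \ E with hF
    have hFa : MeasurableSet[ℱ a] F := (hWmeas a).diff hEa
    have hFm : MeasurableSet F := ℱ.le a _ hFa
    have hdisj : Disjoint E F := disjoint_sdiff_self_right
    have hset : {ω | ∃ t ∈ insert a s, lam < (μ[d | ℱ t]) ω} = E ∪ F := by
      ext ω
      simp only [Finset.mem_insert, Set.mem_union, hE, hF, Set.mem_setOf_eq, Set.mem_diff]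
      constructor
      · rintro ⟨t, (rfl | hts), hlt⟩
        · by_cases hEω : ∃ u ∈ s, lam < (μ[d | ℱ u]) ω
          · exact Or.inl hEω
          · exact Or.inr ⟨hlt, hEω⟩
        · exact Or.inl ⟨t, hts, hlt⟩
      · rintro (⟨t, hts, hlt⟩ | ⟨hlt, _⟩)
        · exact ⟨t, Or.inr hts, hlt⟩
        · exact ⟨a, Or.inl rfl, hlt⟩
    rw [hset]
    have hmu : (μ (E ∪ F)).toReal = (μ E).toReal + (μ F).toReal := by
      rw [measure_union hdisj hFm]
      exact ENNReal.toReal_add (measure_ne_top _ _) (measure_ne_top _ _)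
    have hFbound : lam * (μ F).toReal ≤ ∫ ω in F, d ω ∂μ := by
      have h1 : lam * (μ F).toReal ≤ ∫ ω in F, (μ[d | ℱ a]) ω ∂μ := by
        refine setIntegral_ge_of_const_le_real hFm (measure_ne_top _ _) ?_
          integrable_condExp.integrableOn
        exact fun ω hω => le_of_lt hω.1
      rwa [setIntegral_condExp (ℱ.le a) hd hFa] at h1
    have hsum : ∫ ω in E ∪ F, d ω ∂μ = (∫ ω in E, d ω ∂μ) + ∫ ω in F, d ω ∂μ :=
      setIntegral_union hdisj hFm hd.integrableOn hd.integrableOn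
    rw [hmu, hsum, mul_add]
    exact add_le_add ih hFbound

lemma maximal_countable (ℱ : Filtration ℝ≥0 m) (μ : Measure Ω) [IsFiniteMeasure μ]
    {d : Ω → ℝ} (hd : Integrable d μ) (hd0 : 0 ≤ᵐ[μ] d) {lam : ℝ} (hlam : 0 < lam) (n₀ : ℝ≥0) :
    μ {ω | ∃ k : ℕ, n₀ ≤ q k ∧ lam < (μ[d | ℱ (q k)]) ω}
      ≤ ENNReal.ofReal ((∫ ω, d ω ∂μ) / lam) := by
  classical
  set U : ℕ → Set Ω := fun j => {ω | ∃ k ∈ Finset.range j, n₀ ≤ q k ∧ lam < (μ[d | ℱ (q k)]) ω}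
    with hU
  have hUb : ∀ j, μ (U j) ≤ ENNReal.ofReal ((∫ ω, d ω ∂μ) / lam) := by
    intro j
    set s : Finset ℝ≥0 := ((Finset.range j).filter (fun k => n₀ ≤ q k)).image q with hs
    have hUeq : U j = {ω | ∃ t ∈ s, lam < (μ[d | ℱ t]) ω} := by
      ext ω
      simp only [hU, hs, Set.mem_setOf_eq, Finset.mem_image, Finset.mem_filter, Finset.mem_range]
      constructor
      · rintro ⟨k, hk, hn, hl⟩; exact ⟨q k, ⟨k, ⟨hk, hn⟩, rfl⟩, hl⟩
      · rintro ⟨t, ⟨k, ⟨hk, hn⟩, rfl⟩, hl⟩; exact ⟨k, hk, hn, hl⟩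
    have h1 := maximal_finset ℱ μ hd (lam := lam) s
    have h2 : ∫ ω in {ω | ∃ t ∈ s, lam < (μ[d | ℱ t]) ω}, d ω ∂μ ≤ ∫ ω, d ω ∂μ :=
      setIntegral_le_integral hd hd0
    have h3 : (μ (U j)).toReal ≤ (∫ ω, d ω ∂μ) / lam := by
      rw [le_div_iff₀ hlam, mul_comm]
      rw [hUeq]; exact le_trans h1 h2
    calc μ (U j) = ENNReal.ofReal ((μ (U j)).toReal) :=
        (ENNReal.ofReal_toReal (measure_ne_top _ _)).symm
      _ ≤ _ := ENNReal.ofReal_le_ofReal h3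
  have hset : {ω | ∃ k : ℕ, n₀ ≤ q k ∧ lam < (μ[d | ℱ (q k)]) ω} = ⋃ j, U j := by
    ext ω
    simp only [Set.mem_setOf_eq, Set.mem_iUnion, hU, Finset.mem_range]
    constructor
    · rintro ⟨k, h1, h2⟩; exact ⟨k + 1, k, Nat.lt_succ_self k, h1, h2⟩
    · rintro ⟨j, k, _, h1, h2⟩; exact ⟨k, h1, h2⟩
  rw [hset]
  have hmono : Monotone U := by
    intro i j hij ω
    simp only [hU, Set.mem_setOf_eq]
    rintro ⟨k, hk, h1, h2⟩
    exact ⟨k, Finset.mem_range.2 (lt_of_lt_of_le (Finset.mem_range.1 hk) hij), h1, h2⟩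
  rw [hmono.directed_le.measure_iUnion]
  exact iSup_le hUb

lemma levy (ℱ : Filtration ℝ≥0 m) (μ : Measure Ω) [IsProbabilityMeasure μ]
    {h : Ω → ℝ} (hh : Integrable h μ)
    (hhm : StronglyMeasurable[⨆ n : ℕ, (ℱ (n : ℝ≥0) : MeasurableSpace Ω)] h)
    (Mc : ℝ≥0 → Ω → ℝ)
    (hMc : ∀ t : ℝ≥0, Mc t =ᵐ[μ] μ[h | ℱ t])
    (hrc : ∀ ω, ∀ t : ℝ≥0, ContinuousWithinAt (fun s => Mc s ω) (Set.Ici t) t) :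
    (∀ᵐ ω ∂μ, Tendsto (fun t => Mc t ω) atTop (nhds (h ω))) ∧
      Tendsto (fun t : ℝ≥0 => ∫ ω, |Mc t ω - h ω| ∂μ) atTop (nhds 0) := by
  set 𝒢 : Filtration ℕ m :=
    ⟨fun n => ℱ (n : ℝ≥0), fun i j hij => ℱ.mono (by exact_mod_cast hij), fun n => ℱ.le _⟩
    with h𝒢
  have hGcoe : ∀ n : ℕ, (𝒢 n : MeasurableSpace Ω) = ℱ (n : ℝ≥0) := fun n => rfl
  have hL1 : Tendsto (fun k : ℕ => eLpNorm (μ[h|𝒢 k] - h) 1 μ) atTop (nhds 0) :=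
    hh.tendsto_eLpNorm_condExp hhm
  set d : ℕ → Ω → ℝ := fun k ω => |h ω - (μ[h|𝒢 k]) ω| with hd
  have hd_int : ∀ k, Integrable (d k) μ := fun k => (hh.sub integrable_condExp).abs
  have hd0 : ∀ k, 0 ≤ᵐ[μ] d k := fun k => Filter.Eventually.of_forall (fun ω => abs_nonneg _)
  have hdI : Tendsto (fun k : ℕ => ∫ ω, d k ω ∂μ) atTop (nhds 0) := by
    have heq : ∀ k : ℕ, ∫ ω, d k ω ∂μ = (eLpNorm (μ[h|𝒢 k] - h) 1 μ).toReal := by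
      intro k
      have he : d k = fun ω => |(μ[h|𝒢 k] - h) ω| := by
        funext ω; simp [hd, Pi.sub_apply, abs_sub_comm]
      rw [he, int_abs_eq (integrable_condExp.sub hh)]
    simp only [heq]
    have hcont := (ENNReal.tendsto_toReal (by simp : (0:ℝ≥0∞) ≠ ⊤)).comp hL1
    simpa [Function.comp_def] using hcont
  -- key pointwise (a.e.) bound
  have hkey : ∀ k : ℕ, ∀ t : ℝ≥0, (k : ℝ≥0) ≤ t →
      ∀ᵐ ω ∂μ, |(μ[h | ℱ t]) ω - h ω| ≤ (μ[d k | ℱ t]) ω + d k ω := by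
    intro k t hkt
    have hfix : μ[μ[h|𝒢 k] | ℱ t] = μ[h|𝒢 k] :=
      condExp_of_stronglyMeasurable (ℱ.le t)
        (stronglyMeasurable_condExp.mono (ℱ.mono hkt)) integrable_condExp
    have hsub : μ[h - μ[h|𝒢 k] | ℱ t] =ᵐ[μ] μ[h | ℱ t] - μ[μ[h|𝒢 k] | ℱ t] :=
      condExp_sub hh integrable_condExp _
    have h1 : μ[h - μ[h|𝒢 k] | ℱ t] ≤ᵐ[μ] μ[d k | ℱ t] :=
      condExp_mono (hh.sub integrable_condExp) (hd_int k)
        (Filter.Eventually.of_forall fun ω => by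
          simp only [Pi.sub_apply, hd]; exact le_abs_self _)
    have h2 : μ[μ[h|𝒢 k] - h | ℱ t] ≤ᵐ[μ] μ[d k | ℱ t] :=
      condExp_mono (integrable_condExp.sub hh) (hd_int k)
        (Filter.Eventually.of_forall fun ω => by
          simp only [Pi.sub_apply, hd]; rw [abs_sub_comm]; exact le_abs_self _)
    have h3 : μ[μ[h|𝒢 k] - h | ℱ t] =ᵐ[μ] μ[μ[h|𝒢 k] | ℱ t] - μ[h | ℱ t] :=
      condExp_sub integrable_condExp hh _
    filter_upwards [hsub, h1, h2, h3] with ω e1 e2 e3 e4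
    rw [hfix] at e1 e4
    simp only [Pi.sub_apply] at e1 e4
    rw [e1] at e2
    rw [e4] at e3
    have hdk : d k ω = |(μ[h|𝒢 k]) ω - h ω| := by rw [hd]; exact abs_sub_comm _ _
    have htri : |(μ[h | ℱ t]) ω - h ω| ≤
        |(μ[h | ℱ t]) ω - (μ[h|𝒢 k]) ω| + |(μ[h|𝒢 k]) ω - h ω| := abs_sub_le _ _ _
    have habs : |(μ[h | ℱ t]) ω - (μ[h|𝒢 k]) ω| ≤ (μ[d k | ℱ t]) ω := abs_le.2 ⟨by linarith, e2⟩
    rw [← hdk] at htri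
    linarith
  have hkeyQ : ∀ k : ℕ, ∀ᵐ ω ∂μ, ∀ j : ℕ, (k : ℝ≥0) ≤ q j →
      |Mc (q j) ω - h ω| ≤ (μ[d k | ℱ (q j)]) ω + d k ω := by
    intro k
    rw [ae_all_iff]
    intro j
    by_cases hle : (k : ℝ≥0) ≤ q j
    · filter_upwards [hkey k (q j) hle, hMc (q j)] with ω e1 e2
      intro _
      rw [e2]; exact e1
    · exact Filter.Eventually.of_forall fun ω hc => absurd hc hle
  constructor
  · -- a.e. convergence
    have hS : ∀ i : ℕ, μ {ω | ¬ ∃ n : ℕ, ∀ j : ℕ, (n : ℝ≥0) ≤ q j →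
        |Mc (q j) ω - h ω| ≤ 2 * (1 / ((i : ℝ) + 1))} = 0 := by
      intro i
      set lam : ℝ := 1 / ((i : ℝ) + 1) with hlamdef
      have hlam : 0 < lam := by positivity
      set Bad : Set Ω := {ω | ¬ ∃ n : ℕ, ∀ j : ℕ, (n : ℝ≥0) ≤ q j →
        |Mc (q j) ω - h ω| ≤ 2 * lam} with hBad
      have hbound : ∀ k : ℕ, μ Bad ≤ 2 * ENNReal.ofReal ((∫ ω, d k ω ∂μ) / lam) := by
        intro k
        set S1 : Set Ω := {ω | ∃ j : ℕ, (k : ℝ≥0) ≤ q j ∧ lam < (μ[d k | ℱ (q j)]) ω} with hS1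
        set S2 : Set Ω := {ω | lam < d k ω} with hS2
        set T : Set Ω := {ω | ¬ ∀ j : ℕ, (k : ℝ≥0) ≤ q j →
          |Mc (q j) ω - h ω| ≤ (μ[d k | ℱ (q j)]) ω + d k ω} with hT
        have hTnull : μ T = 0 := by
          have h5 := hkeyQ k
          rw [ae_iff] at h5
          exact h5
        have hsub2 : Bad ⊆ (S1 ∪ S2) ∪ T := by
          intro ω hω
          by_cases hTω : ω ∈ T
          · exact Or.inr hTω
          · left
            simp only [hT, Set.mem_setOf_eq, not_not, not_forall] at hTω
            push_neg at hTω
            simp only [hBad, Set.mem_setOf_eq, not_exists, not_forall] at hω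
            obtain ⟨j, hj1, hj2⟩ := hω k
            push_neg at hj2
            have hW := hTω j hj1
            by_cases hc : lam < (μ[d k | ℱ (q j)]) ω
            · exact Or.inl ⟨j, hj1, hc⟩
            · right
              simp only [hS2, Set.mem_setOf_eq]
              push_neg at hc
              linarith
        calc μ Bad ≤ μ ((S1 ∪ S2) ∪ T) := measure_mono hsub2
          _ ≤ μ (S1 ∪ S2) + μ T := measure_union_le _ _
          _ = μ (S1 ∪ S2) := by rw [hTnull, add_zero]
          _ ≤ μ S1 + μ S2 := measure_union_le _ _
          _ ≤ ENNReal.ofReal ((∫ ω, d k ω ∂μ) / lam)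
              + ENNReal.ofReal ((∫ ω, d k ω ∂μ) / lam) := by
              refine add_le_add ?_ ?_
              · exact maximal_countable ℱ μ (hd_int k) (hd0 k) hlam k
              · exact markov_real (hd_int k) (hd0 k) hlam
          _ = 2 * ENNReal.ofReal ((∫ ω, d k ω ∂μ) / lam) := by rw [two_mul]
      have htend : Tendsto (fun k : ℕ => 2 * ENNReal.ofReal ((∫ ω, d k ω ∂μ) / lam))
          atTop (nhds 0) := by
        have h1 : Tendsto (fun k : ℕ => (∫ ω, d k ω ∂μ) / lam) atTop (nhds 0) := by
          simpa using hdI.div_const lam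
        have h2 : Tendsto (fun k : ℕ => ENNReal.ofReal ((∫ ω, d k ω ∂μ) / lam))
            atTop (nhds 0) := by
          have h6 := (ENNReal.continuous_ofReal.tendsto 0).comp h1
          simpa [Function.comp_def] using h6
        have h7 := ENNReal.Tendsto.const_mul h2 (Or.inr (by norm_num : (2:ℝ≥0∞) ≠ ⊤))
        simpa using h7
      have hfin : μ Bad ≤ 0 := ge_of_tendsto htend (Filter.Eventually.of_forall hbound)
      exact le_antisymm hfin zero_le
    have hA : ∀ᵐ ω ∂μ, ∀ i : ℕ, ∃ n : ℕ, ∀ j : ℕ, (n : ℝ≥0) ≤ q j →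
        |Mc (q j) ω - h ω| ≤ 2 * (1 / ((i : ℝ) + 1)) := by
      rw [ae_all_iff]
      intro i
      rw [ae_iff]
      exact hS i
    filter_upwards [hA] with ω hω
    rw [Metric.tendsto_atTop]
    intro ε hε
    obtain ⟨i, hi⟩ := exists_nat_one_div_lt (show (0:ℝ) < ε / 4 by linarith)
    obtain ⟨n, hn⟩ := hω i
    refine ⟨(n : ℝ≥0), fun t ht => ?_⟩
    have hF : ∀ u : ℝ≥0, ContinuousWithinAt (fun s => Mc s ω - h ω) (Set.Ici u) u :=
      fun u => (hrc ω u).sub continuousWithinAt_const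
    have hb := abs_le_of_dense hF (n := n) (b := 2 * (1 / ((i : ℝ) + 1))) (fun j hj => hn j hj) t ht
    rw [Real.dist_eq]
    have h8 : 2 * (1 / ((i : ℝ) + 1)) < ε := by
      have : (1 : ℝ) / ((i : ℝ) + 1) < ε / 4 := hi
      linarith
    linarith
  · -- L¹ convergence
    rw [Metric.tendsto_atTop]
    intro ε hε
    have hev : ∀ᶠ k : ℕ in atTop, ∫ ω, d k ω ∂μ < ε / 2 :=
      hdI.eventually (gt_mem_nhds (by linarith))
    obtain ⟨k, hk⟩ := hev.exists
    refine ⟨(k : ℝ≥0), fun t ht => ?_⟩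
    have hb1 : ∫ ω, |Mc t ω - h ω| ∂μ = ∫ ω, |(μ[h|ℱ t]) ω - h ω| ∂μ := by
      refine integral_congr_ae ?_
      filter_upwards [hMc t] with ω e
      rw [e]
    have hb2 : ∫ ω, |(μ[h|ℱ t]) ω - h ω| ∂μ ≤ ∫ ω, ((μ[d k|ℱ t]) ω + d k ω) ∂μ := by
      refine integral_mono_ae ((integrable_condExp.sub hh).abs)
        (integrable_condExp.add (hd_int k)) ?_
      filter_upwards [hkey k t ht] with ω e
      simpa using e
    have hb3 : ∫ ω, ((μ[d k|ℱ t]) ω + d k ω) ∂μ = 2 * ∫ ω, d k ω ∂μ := by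
      rw [integral_add integrable_condExp (hd_int k), integral_condExp (ℱ.le t)]
      ring
    have hnn : (0:ℝ) ≤ ∫ ω, |Mc t ω - h ω| ∂μ := integral_nonneg fun ω => abs_nonneg _
    rw [Real.dist_eq, sub_zero, abs_of_nonneg hnn, hb1]
    calc ∫ ω, |(μ[h|ℱ t]) ω - h ω| ∂μ ≤ 2 * ∫ ω, d k ω ∂μ := by rw [← hb3]; exact hb2
      _ < 2 * (ε / 2) := by linarith
      _ = ε := by ring

end SigmaAux

/-- Under the assumptions of the main existence theorem, if moreover the
submartingale `X` is uniformly integrable, then `X_t → X_∞` a.s., `Q = X_∞ · P`, a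
nonnegative functional `F` is `Q`-integrable iff `F X_∞` is `P`-integrable, and in that case
the density martingale `M_t(F)` is a version of `E_P[F X_∞ | F_t]`, converging a.s. and in
`L¹` to `F X_∞`. -/
theorem Q_absolutely_continuous_of_UI {Ω : Type*} [m : MeasurableSpace Ω]
    (ℱ : Filtration ℝ≥0 m) (μ : Measure Ω) [IsProbabilityMeasure μ]
    (hNP : PropertyNP ℱ μ)
    (X N A : ℝ≥0 → Ω → ℝ)
    (hX : IsClassSigma ℱ μ X N A)
    (hN : Martingale N ℱ μ)
    (hint : ∀ t : ℝ≥0, Integrable (X t) μ)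
    (g : Ω → ℝ≥0∞)
    (hg : ∀ ω, g ω = sSup {s : ℝ≥0∞ | ∃ u : ℝ≥0, s = (u : ℝ≥0∞) ∧ X u ω = 0})
    (Q : Measure Ω) (hQ : IsQMeasure ℱ μ X g Q)
    (hUI : UniformIntegrable X 1 μ) :
    ∃ Xinf : Ω → ℝ, Measurable Xinf ∧
      (∀ᵐ ω ∂μ, Tendsto (fun t => X t ω) atTop (nhds (Xinf ω))) ∧
      Q = μ.withDensity (fun ω => ENNReal.ofReal (Xinf ω)) ∧
      (∀ F : Ω → ℝ, Measurable F → (∀ ω, 0 ≤ F ω) →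
        (Integrable F Q ↔ Integrable (fun ω => F ω * Xinf ω) μ)) ∧
      (∀ F : Ω → ℝ, Measurable F → (∀ ω, 0 ≤ F ω) → Integrable F Q →
        ∀ M : ℝ≥0 → Ω → ℝ, IsDensityMartingale ℱ μ Q F M →
          (∀ t : ℝ≥0, M t =ᵐ[μ] μ[fun ω => F ω * Xinf ω | ℱ t]) ∧
          (∀ᵐ ω ∂μ, Tendsto (fun t => M t ω) atTop (nhds (F ω * Xinf ω))) ∧
          Tendsto (fun t : ℝ≥0 => ∫ ω, |M t ω - F ω * Xinf ω| ∂μ) atTop (nhds 0)) := by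
  classical
  obtain ⟨hNP1, hNP2, hNP3, hNP4⟩ := hNP
  obtain ⟨hQsf, hQg, hQid⟩ := hQ
  haveI : SigmaFinite Q := hQsf
  set 𝒢 : Filtration ℕ m :=
    ⟨fun n => ℱ (n : ℝ≥0), fun i j hij => ℱ.mono (by exact_mod_cast hij), fun n => ℱ.le _⟩
    with h𝒢
  have hXeq : ∀ t : ℝ≥0, X t = fun ω => N t ω + A t ω := fun t => funext fun ω => hX.decomp t ω
  have hXs : ∀ t : ℝ≥0, StronglyMeasurable[ℱ t] (X t) := by
    intro t; rw [hXeq t]; exact ((hX.adaptedN t).add (hX.adaptedA t)).stronglyMeasurable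
  have hAeq : ∀ t : ℝ≥0, A t = fun ω => X t ω - N t ω := fun t => funext fun ω => by
    have := hX.decomp t ω; linarith
  have hintN : ∀ t : ℝ≥0, Integrable (N t) μ := hN.integrable
  have hAint : ∀ t : ℝ≥0, Integrable (A t) μ := by
    intro t; rw [hAeq t]; exact (hint t).sub (hintN t)
  have hA0 : ∀ (t : ℝ≥0) ω, 0 ≤ A t ω := fun t ω => by
    have h1 : A 0 ω ≤ A t ω := hX.monoA ω zero_le
    have h2 := hX.zeroA ω
    linarith
  -- expectations
  have hEX : ∀ t : ℝ≥0, ∫ ω, X t ω ∂μ = 0 → X t =ᵐ[μ] 0 := fun t h =>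
    (integral_eq_zero_iff_of_nonneg (fun ω => hX.nonneg t ω) (hint t)).1 h
  have hEconstN : ∀ s t : ℝ≥0, s ≤ t → ∫ ω, N s ω ∂μ = ∫ ω, N t ω ∂μ := by
    intro s t hst
    have h1 := hN.2 s t hst
    have h2 : ∫ ω, (μ[N t | ℱ s]) ω ∂μ = ∫ ω, N t ω ∂μ := integral_condExp (ℱ.le s)
    rw [← h2]
    exact (integral_congr_ae h1).symm
  have hEmono : ∀ s t : ℝ≥0, s ≤ t → ∫ ω, X s ω ∂μ ≤ ∫ ω, X t ω ∂μ := by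
    intro s t hst
    have e1 : ∫ ω, X s ω ∂μ = (∫ ω, N s ω ∂μ) + ∫ ω, A s ω ∂μ := by
      rw [hXeq s]; exact integral_add (hintN s) (hAint s)
    have e2 : ∫ ω, X t ω ∂μ = (∫ ω, N t ω ∂μ) + ∫ ω, A t ω ∂μ := by
      rw [hXeq t]; exact integral_add (hintN t) (hAint t)
    have e3 := hEconstN s t hst
    have e4 : ∫ ω, A s ω ∂μ ≤ ∫ ω, A t ω ∂μ :=
      integral_mono (hAint s) (hAint t) (fun ω => hX.monoA ω hst)
    linarith
  -- submartingale along ℕ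
  have hXsub : Submartingale (fun n : ℕ => X (n : ℝ≥0)) 𝒢 μ := by
    refine ⟨fun n => hXs _, fun i j hij => ?_, fun n => hint _⟩
    have hc : (i : ℝ≥0) ≤ (j : ℝ≥0) := by exact_mod_cast hij
    have e1 : μ[X (j : ℝ≥0) | 𝒢 i] =ᵐ[μ] μ[N (j : ℝ≥0) | 𝒢 i] + μ[A (j : ℝ≥0) | 𝒢 i] := by
      rw [hXeq (j : ℝ≥0)]
      exact condExp_add (hintN _) (hAint _) _
    have e2 : μ[N (j : ℝ≥0) | 𝒢 i] =ᵐ[μ] N (i : ℝ≥0) := hN.2 _ _ hc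
    have e4 : μ[A (i : ℝ≥0) | 𝒢 i] = A (i : ℝ≥0) :=
      condExp_of_stronglyMeasurable (𝒢.le i) (hX.adaptedA _).stronglyMeasurable (hAint _)
    have e5 : μ[A (i : ℝ≥0) | 𝒢 i] ≤ᵐ[μ] μ[A (j : ℝ≥0) | 𝒢 i] :=
      condExp_mono (hAint _) (hAint _) (Filter.Eventually.of_forall fun ω => hX.monoA ω hc)
    rw [e4] at e5
    filter_upwards [e1, e2, e5] with ω f1 f2 f3
    have f4 : (μ[X (j : ℝ≥0) | 𝒢 i]) ω
        = (μ[N (j : ℝ≥0) | 𝒢 i]) ω + (μ[A (j : ℝ≥0) | 𝒢 i]) ω := f1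
    have f5 := hX.decomp (i : ℝ≥0) ω
    show X (i : ℝ≥0) ω ≤ (μ[X (j : ℝ≥0) | 𝒢 i]) ω
    rw [f4, f5, f2]
    linarith
  obtain ⟨R, hR⟩ := hUI.2.2
  have hRn : ∀ n : ℕ, eLpNorm ((fun n : ℕ => X (n : ℝ≥0)) n) 1 μ ≤ (R : ℝ≥0∞) := fun n => hR _
  set Xinf : Ω → ℝ := 𝒢.limitProcess (fun n : ℕ => X (n : ℝ≥0)) μ with hXinfdef
  have hXinfSM : StronglyMeasurable[⨆ n : ℕ, (𝒢 n : MeasurableSpace Ω)] Xinf :=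
    Filtration.stronglyMeasurable_limitProcess
  have hsup_le : (⨆ n : ℕ, (𝒢 n : MeasurableSpace Ω)) ≤ m := iSup_le fun n => 𝒢.le n
  have hXinf_meas : Measurable Xinf := hXinfSM.measurable.mono hsup_le le_rfl
  have hXtendN : ∀ᵐ ω ∂μ, Tendsto (fun n : ℕ => X (n : ℝ≥0) ω) atTop (nhds (Xinf ω)) :=
    hXsub.ae_tendsto_limitProcess hRn
  have hXinf_int : Integrable Xinf μ :=
    memLp_one_iff_integrable.1 (hXsub.memLp_limitProcess hRn)
  have hUIn : UniformIntegrable (fun n : ℕ => X (n : ℝ≥0)) 1 μ := by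
    refine ⟨fun n => hUI.1 _, ?_, ⟨R, hRn⟩⟩
    intro ε hε
    obtain ⟨δ, hδ, hδ2⟩ := hUI.2.1 hε
    exact ⟨δ, hδ, fun n s hs hμs => hδ2 _ s hs hμs⟩
  have hXL1 : Tendsto (fun n : ℕ => eLpNorm ((fun n : ℕ => X (n : ℝ≥0)) n - Xinf) 1 μ)
      atTop (nhds 0) := hXsub.tendsto_eLpNorm_one_limitProcess hUIn
  have hXL1R : Tendsto (fun n : ℕ => ∫ ω, |X (n : ℝ≥0) ω - Xinf ω| ∂μ) atTop (nhds 0) := by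
    have h1 : ∀ n : ℕ, (eLpNorm ((fun n : ℕ => X (n : ℝ≥0)) n - Xinf) 1 μ).toReal
        = ∫ ω, |X (n : ℝ≥0) ω - Xinf ω| ∂μ :=
      fun n => (SigmaAux.int_abs_eq ((hint _).sub hXinf_int)).symm
    have h2 := (ENNReal.tendsto_toReal (by simp : (0 : ℝ≥0∞) ≠ ⊤)).comp hXL1
    simp only [Function.comp_def] at h2
    simp only [h1] at h2
    simpa using h2
  have hsetI : ∀ s : Set Ω, MeasurableSet s →
      Tendsto (fun n : ℕ => ∫ ω in s, X (n : ℝ≥0) ω ∂μ) atTop (nhds (∫ ω in s, Xinf ω ∂μ)) := by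
    intro s hs
    have hb : ∀ n : ℕ, dist (∫ ω in s, X (n : ℝ≥0) ω ∂μ) (∫ ω in s, Xinf ω ∂μ)
        ≤ ∫ ω, |X (n : ℝ≥0) ω - Xinf ω| ∂μ := by
      intro n
      rw [Real.dist_eq, ← integral_sub ((hint _).integrableOn) hXinf_int.integrableOn]
      calc |∫ ω in s, (X (n : ℝ≥0) ω - Xinf ω) ∂μ|
          ≤ ∫ ω in s, |X (n : ℝ≥0) ω - Xinf ω| ∂μ := by
            simpa [Real.norm_eq_abs] using
              norm_integral_le_integral_norm (μ := μ.restrict s)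
                (fun ω => X (n : ℝ≥0) ω - Xinf ω)
        _ ≤ ∫ ω, |X (n : ℝ≥0) ω - Xinf ω| ∂μ :=
          setIntegral_le_integral ((hint _).sub hXinf_int).abs
            (Filter.Eventually.of_forall fun ω => abs_nonneg _)
    rw [tendsto_iff_dist_tendsto_zero]
    exact squeeze_zero (fun n => dist_nonneg) hb hXL1R
  -- martingale part N
  have hNmartn : Martingale (fun n : ℕ => N (n : ℝ≥0)) 𝒢 μ :=
    ⟨fun n => hN.stronglyAdapted _, fun i j hij => hN.2 _ _ (by exact_mod_cast hij)⟩
  set RN : ℝ≥0 := R + (R + ‖∫ ω, N ((0 : ℕ) : ℝ≥0) ω ∂μ‖₊) with hRNdef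
  have hNbdd : ∀ n : ℕ, eLpNorm ((fun n : ℕ => N (n : ℝ≥0)) n) 1 μ ≤ (RN : ℝ≥0∞) := by
    intro n
    have h1 : eLpNorm (N (n : ℝ≥0)) 1 μ
        ≤ ∫⁻ ω, ((‖X (n : ℝ≥0) ω‖₊ : ℝ≥0∞) + (‖A (n : ℝ≥0) ω‖₊ : ℝ≥0∞)) ∂μ := by
      rw [eLpNorm_one_eq_lintegral_enorm]
      refine lintegral_mono fun ω => ?_
      have h2 : N (n : ℝ≥0) ω = X (n : ℝ≥0) ω - A (n : ℝ≥0) ω := by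
        have := hX.decomp (n : ℝ≥0) ω; linarith
      rw [h2, ← ENNReal.coe_add]
      exact ENNReal.coe_le_coe.2 (nnnorm_sub_le _ _)
    have h3 : ∫⁻ ω, ((‖X (n : ℝ≥0) ω‖₊ : ℝ≥0∞) + (‖A (n : ℝ≥0) ω‖₊ : ℝ≥0∞)) ∂μ
        = (∫⁻ ω, (‖X (n : ℝ≥0) ω‖₊ : ℝ≥0∞) ∂μ) + ∫⁻ ω, (‖A (n : ℝ≥0) ω‖₊ : ℝ≥0∞) ∂μ :=
      lintegral_add_left' ((hXs _).mono (ℱ.le _)).aestronglyMeasurable.enorm _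
    have h4 : ∫⁻ ω, (‖X (n : ℝ≥0) ω‖₊ : ℝ≥0∞) ∂μ ≤ (R : ℝ≥0∞) := by
      exact (eLpNorm_one_eq_lintegral_enorm (f := X (n : ℝ≥0)) (μ := μ)).symm.le.trans (hR _)
    have h5 : ∫⁻ ω, (‖A (n : ℝ≥0) ω‖₊ : ℝ≥0∞) ∂μ
        ≤ (R : ℝ≥0∞) + (‖∫ ω, N ((0 : ℕ) : ℝ≥0) ω ∂μ‖₊ : ℝ≥0∞) := by
      have e1 : ∫⁻ ω, (‖A (n : ℝ≥0) ω‖₊ : ℝ≥0∞) ∂μ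
          = ENNReal.ofReal (∫ ω, A (n : ℝ≥0) ω ∂μ) := by
        rw [ofReal_integral_eq_lintegral_ofReal (hAint _)
          (Filter.Eventually.of_forall (hA0 _))]
        refine lintegral_congr fun ω => ?_
        rw [← Real.enorm_eq_ofReal (hA0 _ ω)]; rfl
      have e3 : ∫ ω, A (n : ℝ≥0) ω ∂μ
          = (∫ ω, X (n : ℝ≥0) ω ∂μ) - ∫ ω, N (n : ℝ≥0) ω ∂μ := by
        rw [hAeq (n : ℝ≥0)]; exact integral_sub (hint _) (hintN _)
      have e4 : ∫ ω, X (n : ℝ≥0) ω ∂μ ≤ (R : ℝ) := by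
        have e5 : ∫ ω, X (n : ℝ≥0) ω ∂μ ≤ ∫ ω, |X (n : ℝ≥0) ω| ∂μ :=
          integral_mono (hint _) (hint _).abs (fun ω => le_abs_self _)
        have e6 : ∫ ω, |X (n : ℝ≥0) ω| ∂μ = (eLpNorm (X (n : ℝ≥0)) 1 μ).toReal :=
          SigmaAux.int_abs_eq (hint _)
        have e7 : (eLpNorm (X (n : ℝ≥0)) 1 μ).toReal ≤ (R : ℝ≥0∞).toReal :=
          ENNReal.toReal_mono ENNReal.coe_ne_top (hR _)
        simp only [ENNReal.coe_toReal] at e7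
        linarith
      have e8 : ∫ ω, N (n : ℝ≥0) ω ∂μ = ∫ ω, N ((0 : ℕ) : ℝ≥0) ω ∂μ :=
        (hEconstN _ _ (by exact_mod_cast Nat.zero_le n)).symm
      have e9 : ∫ ω, A (n : ℝ≥0) ω ∂μ ≤ (R : ℝ) + |∫ ω, N ((0 : ℕ) : ℝ≥0) ω ∂μ| := by
        rw [e3, e8]
        have := neg_abs_le (∫ ω, N ((0 : ℕ) : ℝ≥0) ω ∂μ)
        linarith
      rw [e1]
      calc ENNReal.ofReal (∫ ω, A (n : ℝ≥0) ω ∂μ)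
          ≤ ENNReal.ofReal ((R : ℝ) + |∫ ω, N ((0 : ℕ) : ℝ≥0) ω ∂μ|) :=
            ENNReal.ofReal_le_ofReal e9
        _ = (R : ℝ≥0∞) + (‖∫ ω, N ((0 : ℕ) : ℝ≥0) ω ∂μ‖₊ : ℝ≥0∞) := by
            rw [ENNReal.ofReal_add R.coe_nonneg (abs_nonneg _)]
            rw [ENNReal.ofReal_coe_nnreal, ← Real.enorm_eq_ofReal_abs]; rfl
    calc eLpNorm (N (n : ℝ≥0)) 1 μ
        ≤ (∫⁻ ω, (‖X (n : ℝ≥0) ω‖₊ : ℝ≥0∞) ∂μ) + ∫⁻ ω, (‖A (n : ℝ≥0) ω‖₊ : ℝ≥0∞) ∂μ := by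
          rw [← h3]; exact h1
      _ ≤ (R : ℝ≥0∞) + ((R : ℝ≥0∞) + (‖∫ ω, N ((0 : ℕ) : ℝ≥0) ω ∂μ‖₊ : ℝ≥0∞)) :=
          add_le_add h4 h5
      _ = (RN : ℝ≥0∞) := by rw [hRNdef]; push_cast; ring
  set Ninf : Ω → ℝ := 𝒢.limitProcess (fun n : ℕ => N (n : ℝ≥0)) μ with hNinfdef
  have hNtendn : ∀ᵐ ω ∂μ, Tendsto (fun n : ℕ => N (n : ℝ≥0) ω) atTop (nhds (Ninf ω)) :=
    hNmartn.submartingale.ae_tendsto_limitProcess hNbdd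
  have hNinfSM : StronglyMeasurable[⨆ n : ℕ, (𝒢 n : MeasurableSpace Ω)] Ninf :=
    Filtration.stronglyMeasurable_limitProcess
  have hNinf_int : Integrable Ninf μ :=
    memLp_one_iff_integrable.1 (hNmartn.submartingale.memLp_limitProcess hNbdd)
  set Ainf : Ω → ℝ := fun ω => Xinf ω - Ninf ω with hAinfdef
  have hAinf_int : Integrable Ainf μ := hXinf_int.sub hNinf_int
  have hAtendn : ∀ᵐ ω ∂μ, Tendsto (fun n : ℕ => A (n : ℝ≥0) ω) atTop (nhds (Ainf ω)) := by
    filter_upwards [hXtendN, hNtendn] with ω e1 e2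
    refine Tendsto.congr (fun n => ?_) (e1.sub e2)
    have := hX.decomp (n : ℝ≥0) ω; linarith
  have hAle : ∀ᵐ ω ∂μ, ∀ n : ℕ, A (n : ℝ≥0) ω ≤ Ainf ω := by
    filter_upwards [hAtendn] with ω e1
    intro n
    refine ge_of_tendsto e1 ?_
    filter_upwards [eventually_ge_atTop n] with k hk
    exact hX.monoA ω (by exact_mod_cast hk)
  have hAL1 : Tendsto (fun n : ℕ => ∫ ω, |A (n : ℝ≥0) ω - Ainf ω| ∂μ) atTop (nhds 0) := by
    have hdom := tendsto_integral_of_dominated_convergence (μ := μ)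
      (F := fun (n : ℕ) ω => |A (n : ℝ≥0) ω - Ainf ω|) (f := fun _ => (0 : ℝ))
      (fun ω => |Ainf ω|)
      (fun n => ((hAint _).sub hAinf_int).abs.aestronglyMeasurable)
      hAinf_int.abs
      (by
        intro n
        filter_upwards [hAle] with ω e
        rw [Real.norm_eq_abs, abs_abs]
        have h0 := hA0 (n : ℝ≥0) ω
        have h1 := e n
        rw [abs_of_nonpos (by linarith)]
        have := le_abs_self (Ainf ω)
        linarith)
      (by
        filter_upwards [hAtendn] with ω e
        have h2 := (e.sub (tendsto_const_nhds (x := Ainf ω))).abs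
        simpa using h2)
    simpa using hdom
  have hNL1R : Tendsto (fun n : ℕ => ∫ ω, |N (n : ℝ≥0) ω - Ninf ω| ∂μ) atTop (nhds 0) := by
    have hb : ∀ n : ℕ, ∫ ω, |N (n : ℝ≥0) ω - Ninf ω| ∂μ
        ≤ (∫ ω, |X (n : ℝ≥0) ω - Xinf ω| ∂μ) + ∫ ω, |A (n : ℝ≥0) ω - Ainf ω| ∂μ := by
      intro n
      have iX : Integrable (fun ω => |X (n : ℝ≥0) ω - Xinf ω|) μ := ((hint _).sub hXinf_int).abs
      have iA : Integrable (fun ω => |A (n : ℝ≥0) ω - Ainf ω|) μ := ((hAint _).sub hAinf_int).abs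
      have iN : Integrable (fun ω => |N (n : ℝ≥0) ω - Ninf ω|) μ := ((hintN _).sub hNinf_int).abs
      rw [← integral_add iX iA]
      refine integral_mono iN (iX.add iA) (fun ω => ?_)
      have h2 : N (n : ℝ≥0) ω - Ninf ω
          = (X (n : ℝ≥0) ω - Xinf ω) - (A (n : ℝ≥0) ω - Ainf ω) := by
        have := hX.decomp (n : ℝ≥0) ω
        simp only [hAinfdef]
        linarith
      rw [h2, sub_eq_add_neg]
      refine (abs_add_le _ _).trans (le_of_eq ?_)
      rw [abs_neg]
    have hsum := hXL1R.add hAL1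
    rw [add_zero] at hsum
    exact squeeze_zero (fun n => integral_nonneg fun ω => abs_nonneg _) hb hsum
  -- N t = E[Ninf | ℱ t]
  have hNcondn : ∀ n : ℕ, N (n : ℝ≥0) =ᵐ[μ] μ[Ninf | 𝒢 n] := by
    intro n
    have hk : ∀ k : ℕ, n ≤ k → eLpNorm (fun ω => N (n : ℝ≥0) ω - (μ[Ninf | 𝒢 n]) ω) 1 μ
        ≤ eLpNorm (fun ω => N (k : ℝ≥0) ω - Ninf ω) 1 μ := by
      intro k hnk
      have e1 : μ[(fun n : ℕ => N (n : ℝ≥0)) k | 𝒢 n] =ᵐ[μ] N (n : ℝ≥0) := hNmartn.2 n k hnk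
      have e2 : μ[(fun ω => N (k : ℝ≥0) ω - Ninf ω) | 𝒢 n]
          =ᵐ[μ] μ[N (k : ℝ≥0) | 𝒢 n] - μ[Ninf | 𝒢 n] := condExp_sub (hintN _) hNinf_int _
      have e3 : (fun ω => N (n : ℝ≥0) ω - (μ[Ninf | 𝒢 n]) ω)
          =ᵐ[μ] μ[(fun ω => N (k : ℝ≥0) ω - Ninf ω) | 𝒢 n] := by
        filter_upwards [e1, e2] with ω f1 f2
        rw [f2]
        simp only [Pi.sub_apply]
        rw [f1]
      calc eLpNorm (fun ω => N (n : ℝ≥0) ω - (μ[Ninf | 𝒢 n]) ω) 1 μ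
          = eLpNorm (μ[(fun ω => N (k : ℝ≥0) ω - Ninf ω) | 𝒢 n]) 1 μ := eLpNorm_congr_ae e3
        _ ≤ eLpNorm (fun ω => N (k : ℝ≥0) ω - Ninf ω) 1 μ := eLpNorm_one_condExp_le_eLpNorm _
    have hto : Tendsto (fun k : ℕ => eLpNorm (fun ω => N (k : ℝ≥0) ω - Ninf ω) 1 μ)
        atTop (nhds 0) := by
      have heq : ∀ k : ℕ, eLpNorm (fun ω => N (k : ℝ≥0) ω - Ninf ω) 1 μ
          = ENNReal.ofReal (∫ ω, |N (k : ℝ≥0) ω - Ninf ω| ∂μ) := fun k =>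
        SigmaAux.eLpNorm_eq_ofReal_int_abs ((hintN _).sub hNinf_int)
      simp only [heq]
      have h6 := (ENNReal.continuous_ofReal.tendsto 0).comp hNL1R
      simpa [Function.comp_def] using h6
    have hzero : eLpNorm (fun ω => N (n : ℝ≥0) ω - (μ[Ninf | 𝒢 n]) ω) 1 μ = 0 := by
      have hle0 : eLpNorm (fun ω => N (n : ℝ≥0) ω - (μ[Ninf | 𝒢 n]) ω) 1 μ ≤ 0 := by
        refine ge_of_tendsto hto ?_
        filter_upwards [eventually_ge_atTop n] with k hkn
        exact hk k hkn
      exact le_antisymm hle0 zero_le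
    have h7 := (eLpNorm_eq_zero_iff
      (((hintN _).sub integrable_condExp).aestronglyMeasurable) one_ne_zero).1 hzero
    filter_upwards [h7] with ω e
    have h8 : N (n : ℝ≥0) ω - (μ[Ninf | 𝒢 n]) ω = 0 := e
    linarith
  have hNcond : ∀ t : ℝ≥0, N t =ᵐ[μ] μ[Ninf | ℱ t] := by
    intro t
    obtain ⟨n, hn⟩ := exists_nat_ge t
    have e1 : N t =ᵐ[μ] μ[N (n : ℝ≥0) | ℱ t] := (hN.2 t n hn).symm
    have e2 : μ[N (n : ℝ≥0) | ℱ t] =ᵐ[μ] μ[μ[Ninf | 𝒢 n] | ℱ t] := condExp_congr_ae (hNcondn n)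
    have e3 : μ[μ[Ninf | 𝒢 n] | ℱ t] =ᵐ[μ] μ[Ninf | ℱ t] :=
      condExp_condExp_of_le (ℱ.mono hn) (𝒢.le n)
    exact e1.trans (e2.trans e3)
  -- sigma algebra facts
  have hm_nat : m = ⨆ n : ℕ, (𝒢 n : MeasurableSpace Ω) := by
    refine le_antisymm ?_ (iSup_le fun n => 𝒢.le n)
    calc m = ⨆ t : ℝ≥0, (ℱ t : MeasurableSpace Ω) := hNP3
      _ ≤ ⨆ n : ℕ, (𝒢 n : MeasurableSpace Ω) := by
        refine iSup_le fun t => ?_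
        obtain ⟨n, hn⟩ := exists_nat_ge t
        exact le_trans (ℱ.mono hn) (le_iSup (fun n : ℕ => (𝒢 n : MeasurableSpace Ω)) n)
  have hSM_of_meas : ∀ {f : Ω → ℝ}, Measurable f →
      StronglyMeasurable[⨆ n : ℕ, (𝒢 n : MeasurableSpace Ω)] f := by
    intro f hf
    have h1 : Measurable[⨆ n : ℕ, (𝒢 n : MeasurableSpace Ω)] f := by
      rw [← hm_nat]; exact hf
    exact h1.stronglyMeasurable
  have hXinf0 : 0 ≤ᵐ[μ] Xinf := by
    filter_upwards [hXtendN] with ω e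
    exact ge_of_tendsto e (Filter.Eventually.of_forall fun n => hX.nonneg _ ω)
  -- full convergence of X
  have hNfull : ∀ᵐ ω ∂μ, Tendsto (fun t : ℝ≥0 => N t ω) atTop (nhds (Ninf ω)) :=
    (SigmaAux.levy ℱ μ hNinf_int hNinfSM N hNcond hX.cadlagN).1
  have hAfull : ∀ᵐ ω ∂μ, Tendsto (fun t : ℝ≥0 => A t ω) atTop (nhds (Ainf ω)) := by
    filter_upwards [hAtendn] with ω e
    exact SigmaAux.tendsto_full_of_monotone (hX.monoA ω) e
  have hXfull : ∀ᵐ ω ∂μ, Tendsto (fun t : ℝ≥0 => X t ω) atTop (nhds (Xinf ω)) := by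
    filter_upwards [hNfull, hAfull] with ω e1 e2
    have h9 := e1.add e2
    have h10 : Ninf ω + Ainf ω = Xinf ω := by simp [hAinfdef]
    rw [h10] at h9
    exact Tendsto.congr (fun t => (hX.decomp t ω).symm) h9
  
  -- the measure ν
  set ν : Measure Ω := μ.withDensity (fun ω => ENNReal.ofReal (Xinf ω)) with hνdef
  have hdens_meas : Measurable (fun ω => ENNReal.ofReal (Xinf ω)) :=
    ENNReal.measurable_ofReal.comp hXinf_meas
  have hν_apply : ∀ s : Set Ω, MeasurableSet s →
      ν s = ENNReal.ofReal (∫ ω in s, Xinf ω ∂μ) := by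
    intro s hs
    rw [hνdef, withDensity_apply _ hs,
      ← ofReal_integral_eq_lintegral_ofReal hXinf_int.integrableOn (ae_restrict_of_ae hXinf0)]
  have hind : ∀ (t : ℝ≥0) (s : Set Ω), MeasurableSet[ℱ t] s →
      ∫ ω, (Set.indicator s (fun _ => (1 : ℝ)) ω)
          * (Set.indicator {ω' | g ω' ≤ (t : ℝ≥0∞)} (fun _ => (1 : ℝ)) ω) ∂Q
        = ∫ ω in s, X t ω ∂μ := by
    intro t s hs
    have h1 := hQid t (Set.indicator s (fun _ => (1 : ℝ)))
      (measurable_const.indicator hs)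
      ⟨1, fun ω => by by_cases hω : ω ∈ s <;> simp [hω]⟩
    rw [h1, ← integral_indicator (ℱ.le t _ hs)]
    congr 1
    funext ω
    by_cases hω : ω ∈ s <;> simp [hω]
  -- key : Q agrees with ν on every ℱ t measurable set
  have hkeyQν : ∀ (t : ℝ≥0) (s : Set Ω), MeasurableSet[ℱ t] s → Q s = ν s := by
    by_cases hdeg : ∀ n : ℕ, X (n : ℝ≥0) =ᵐ[μ] 0
    · -- degenerate case : Q = 0 and Xinf = 0 a.e.
      have hXt0 : ∀ t : ℝ≥0, X t =ᵐ[μ] 0 := by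
        intro t
        obtain ⟨n, hn⟩ := exists_nat_ge t
        refine hEX t (le_antisymm ?_ (integral_nonneg fun ω => hX.nonneg t ω))
        have h1 : ∫ ω, X (n : ℝ≥0) ω ∂μ = 0 := by
          rw [integral_congr_ae (hdeg n)]; simp
        linarith [hEmono t n hn]
      set U : Set Ω := ⋃ k : ℕ, {ω | X (SigmaAux.q k) ω ≠ 0} with hUdef
      have hUF0 : ∀ B : Set Ω, B ⊆ U → MeasurableSet[ℱ 0] B := by
        intro B hB
        refine hNP1 B ⟨fun n => ⋃ k : ℕ, ⋃ (_ : k ≤ n ∧ SigmaAux.q k ≤ (n : ℝ≥0)),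
          {ω | X (SigmaAux.q k) ω ≠ 0}, ?_, ?_, ?_⟩
        · intro n
          refine MeasurableSet.iUnion fun k => MeasurableSet.iUnion fun hk => ?_
          have h1 : MeasurableSet[ℱ (SigmaAux.q k)] {ω | X (SigmaAux.q k) ω ≠ 0} := by
            have h2 : {ω | X (SigmaAux.q k) ω ≠ 0} = (X (SigmaAux.q k) ⁻¹' {0})ᶜ := by
              ext ω; simp
            rw [h2]
            exact ((hXs _).measurable (measurableSet_singleton (0 : ℝ))).compl
          exact ℱ.mono hk.2 _ h1
        · intro n
          refine measure_iUnion_null fun k => measure_iUnion_null fun hk => ?_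
          have h3 := hXt0 (SigmaAux.q k)
          rw [EventuallyEq, ae_iff] at h3
          simp only [Pi.zero_apply] at h3
          exact h3
        · refine hB.trans ?_
          intro ω hω
          simp only [hUdef, Set.mem_iUnion, Set.mem_setOf_eq] at hω ⊢
          obtain ⟨k, hk⟩ := hω
          obtain ⟨n1, hn1⟩ := exists_nat_ge (SigmaAux.q k)
          refine ⟨max k n1, k, ⟨le_max_left _ _, ?_⟩, hk⟩
          exact le_trans hn1 (by exact_mod_cast le_max_right k n1)
      have hgU : {ω | g ω ≠ ∞} ⊆ U := by
        intro ω hω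
        by_contra hcon
        simp only [hUdef, Set.mem_iUnion, Set.mem_setOf_eq, not_exists, not_not] at hcon
        have hall : ∀ u : ℝ≥0, X u ω = 0 := by
          intro u
          by_contra hu
          have hrc : ContinuousWithinAt (fun s => X s ω) (Set.Ici u) u := by
            have h1 := (hX.cadlagN ω u).add
              ((hX.contA ω).continuousAt.continuousWithinAt (s := Set.Ici u))
            exact h1.congr (fun s _ => hX.decomp s ω) (hX.decomp u ω)
          obtain ⟨k, hk1, hk2⟩ := SigmaAux.exists_q_right hrc (abs_pos.2 hu)
          rw [hcon k] at hk2
          simp only [zero_sub, abs_neg] at hk2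
          exact lt_irrefl _ hk2
        apply hω
        rw [hg ω]
        refine sSup_eq_top.2 fun b hb => ?_
        obtain ⟨nb, hnb⟩ := ENNReal.exists_nat_gt hb.ne
        refine ⟨((nb : ℝ≥0) : ℝ≥0∞), ⟨(nb : ℝ≥0), rfl, hall _⟩, ?_⟩
        exact_mod_cast hnb
      have hQU : ∀ kk n : ℕ,
          Q (spanningSets Q kk ∩ U ∩ {ω | g ω ≤ ((n : ℝ≥0) : ℝ≥0∞)}) = 0 := by
        intro kk n
        set E : Set Ω := spanningSets Q kk ∩ U ∩ {ω | g ω ≤ ((n : ℝ≥0) : ℝ≥0∞)} with hEdef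
        have hEU : E ⊆ U := fun ω hω => hω.1.2
        have hE0 : MeasurableSet[ℱ 0] E := hUF0 E hEU
        have hEm : MeasurableSet E := ℱ.le 0 _ hE0
        have hEfin : Q E < ∞ :=
          lt_of_le_of_lt (measure_mono (fun ω hω => hω.1.1)) (measure_spanningSets_lt_top Q kk)
        have h1 := hQid (n : ℝ≥0) (Set.indicator E (fun _ => (1 : ℝ)))
          (measurable_const.indicator (ℱ.mono zero_le _ hE0))
          ⟨1, fun ω => by by_cases hω : ω ∈ E <;> simp [hω]⟩
        have hLHS : ∫ ω, (Set.indicator E (fun _ => (1 : ℝ)) ω)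
            * (Set.indicator {ω' | g ω' ≤ ((n : ℝ≥0) : ℝ≥0∞)} (fun _ => (1 : ℝ)) ω) ∂Q
            = (Q E).toReal := by
          have hfeq : (fun ω => (Set.indicator E (fun _ => (1 : ℝ)) ω)
              * (Set.indicator {ω' | g ω' ≤ ((n : ℝ≥0) : ℝ≥0∞)} (fun _ => (1 : ℝ)) ω))
              = Set.indicator E (fun _ => (1 : ℝ)) := by
            funext ω
            by_cases hω : ω ∈ E
            · have hg1 : ω ∈ {ω' | g ω' ≤ ((n : ℝ≥0) : ℝ≥0∞)} := hω.2
              rw [Set.indicator_of_mem hω, Set.indicator_of_mem hg1, one_mul]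
            · rw [Set.indicator_of_notMem hω, zero_mul]
          rw [hfeq, integral_indicator_const (1 : ℝ) hEm]
          simp; rfl
        have hRHS : ∫ ω, (Set.indicator E (fun _ => (1 : ℝ)) ω) * X (n : ℝ≥0) ω ∂μ = 0 := by
          have h2 : (fun ω => (Set.indicator E (fun _ => (1 : ℝ)) ω) * X (n : ℝ≥0) ω)
              =ᵐ[μ] 0 := by
            filter_upwards [hdeg n] with ω e
            simp only [Pi.zero_apply] at e ⊢
            rw [e, mul_zero]
          rw [integral_congr_ae h2]
          simp
        rw [hLHS, hRHS] at h1
        rcases (ENNReal.toReal_eq_zero_iff _).1 h1 with h2 | h2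
        · exact h2
        · exact absurd h2 hEfin.ne
      have hQ0 : Q = 0 := by
        have huniv : Q Set.univ = 0 := by
          have hcover : (Set.univ : Set Ω) ⊆ {ω | g ω = ∞}
              ∪ ⋃ kk : ℕ, ⋃ n : ℕ, (spanningSets Q kk ∩ U ∩ {ω | g ω ≤ ((n : ℝ≥0) : ℝ≥0∞)}) := by
            intro ω _
            by_cases hωg : g ω = ∞
            · exact Or.inl hωg
            · right
              simp only [Set.mem_iUnion]
              obtain ⟨kk, hkk⟩ : ∃ kk, ω ∈ spanningSets Q kk := by
                have h4 : ω ∈ ⋃ kk, spanningSets Q kk := by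
                  rw [iUnion_spanningSets]; trivial
                exact Set.mem_iUnion.1 h4
              obtain ⟨n, hn⟩ := ENNReal.exists_nat_gt hωg
              exact ⟨kk, n, ⟨hkk, hgU hωg⟩, by exact_mod_cast hn.le⟩
          have h5 : Q ({ω | g ω = ∞}
              ∪ ⋃ kk : ℕ, ⋃ n : ℕ,
                (spanningSets Q kk ∩ U ∩ {ω | g ω ≤ ((n : ℝ≥0) : ℝ≥0∞)})) = 0 := by
            refine measure_union_null hQg ?_
            exact measure_iUnion_null fun kk => measure_iUnion_null fun n => hQU kk n
          exact le_antisymm (le_trans (measure_mono hcover) h5.le) zero_le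
        exact Measure.measure_univ_eq_zero.1 huniv
      have hXinf0' : Xinf =ᵐ[μ] 0 := by
        have h0seq : ∀ᵐ ω ∂μ, ∀ n : ℕ, X (n : ℝ≥0) ω = 0 := by
          rw [ae_all_iff]
          intro n
          filter_upwards [hdeg n] with ω e
          simpa using e
        filter_upwards [hXtendN, h0seq] with ω e1 e2
        have h6 : Tendsto (fun n : ℕ => X (n : ℝ≥0) ω) atTop (nhds 0) := by
          refine Tendsto.congr (fun n => (e2 n).symm) tendsto_const_nhds
        have h7 := tendsto_nhds_unique e1 h6
        simpa using h7
      intro t s hs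
      rw [hQ0]
      have h8 : ∫ ω in s, Xinf ω ∂μ = 0 := by
        rw [setIntegral_congr_ae (ℱ.le t _ hs) (by filter_upwards [hXinf0'] with ω e _; exact e)]
        simp
      rw [hν_apply s (ℱ.le t _ hs), h8]
      simp
    · -- nondegenerate case
      push_neg at hdeg
      obtain ⟨n₀, hn₀⟩ := hdeg
      have hpos : ∀ n : ℕ, n₀ ≤ n → ∫ ω, X (n : ℝ≥0) ω ∂μ ≠ 0 := by
        intro n hn hcontr
        apply hn₀
        have h1 : ∫ ω, X ((n₀ : ℕ) : ℝ≥0) ω ∂μ ≤ 0 := by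
          rw [← hcontr]
          exact hEmono _ _ (by exact_mod_cast hn)
        exact hEX _ (le_antisymm h1 (integral_nonneg fun ω => hX.nonneg _ ω))
      have hIntInd : ∀ n : ℕ, n₀ ≤ n →
          Integrable (Set.indicator {ω' | g ω' ≤ ((n : ℝ≥0) : ℝ≥0∞)} (fun _ => (1 : ℝ))) Q := by
        intro n hn
        by_contra hni
        have h1 := hQid (n : ℝ≥0) (fun _ => (1 : ℝ)) measurable_const ⟨1, fun ω => by simp⟩
        rw [integral_undef (by simpa using hni)] at h1
        refine hpos n hn ?_
        simpa using h1.symm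
      intro t s hs
      obtain ⟨nt, hnt⟩ := exists_nat_ge t
      set n₁ : ℕ := max n₀ nt with hn₁def
      have hn₁0 : n₀ ≤ n₁ := le_max_left _ _
      have ht1 : t ≤ ((n₁ : ℕ) : ℝ≥0) :=
        le_trans hnt (by exact_mod_cast le_max_right n₀ nt)
      set φ : ℕ → Ω → ℝ := fun j ω => (Set.indicator s (fun _ => (1 : ℝ)) ω)
        * (Set.indicator {ω' | g ω' ≤ (((n₁ + j : ℕ) : ℝ≥0) : ℝ≥0∞)} (fun _ => (1 : ℝ)) ω)
        with hφdef
      have hφ0 : ∀ j ω, 0 ≤ φ j ω := by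
        intro j ω
        simp only [hφdef]
        exact mul_nonneg (Set.indicator_nonneg (fun _ _ => zero_le_one) ω)
          (Set.indicator_nonneg (fun _ _ => zero_le_one) ω)
      have hφ_int : ∀ j, Integrable (φ j) Q := by
        intro j
        have h1 := hIntInd (n₁ + j) (le_trans hn₁0 (Nat.le_add_right _ _))
        refine Integrable.mono' h1 ?_ ?_
        · exact (Measurable.aestronglyMeasurable
            (measurable_const.indicator (ℱ.le t _ hs))).mul h1.aestronglyMeasurable
        · refine Filter.Eventually.of_forall fun ω => ?_
          rw [Real.norm_eq_abs]
          simp only [hφdef]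
          rw [abs_mul]
          have ha0 : (0:ℝ) ≤ Set.indicator s (fun _ => (1:ℝ)) ω :=
            Set.indicator_nonneg (fun _ _ => zero_le_one) ω
          have ha1 : Set.indicator s (fun _ => (1:ℝ)) ω ≤ 1 :=
            Set.indicator_apply_le' (fun _ => le_rfl) (fun _ => zero_le_one)
          have hb0 : (0:ℝ) ≤ Set.indicator {ω' | g ω' ≤ (((n₁ + j : ℕ) : ℝ≥0) : ℝ≥0∞)}
              (fun _ => (1:ℝ)) ω := Set.indicator_nonneg (fun _ _ => zero_le_one) ω
          rw [abs_of_nonneg ha0, abs_of_nonneg hb0]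
          calc Set.indicator s (fun _ => (1:ℝ)) ω
                * Set.indicator {ω' | g ω' ≤ (((n₁ + j : ℕ) : ℝ≥0) : ℝ≥0∞)} (fun _ => (1:ℝ)) ω
              ≤ 1 * Set.indicator {ω' | g ω' ≤ (((n₁ + j : ℕ) : ℝ≥0) : ℝ≥0∞)} (fun _ => (1:ℝ)) ω :=
                mul_le_mul_of_nonneg_right ha1 hb0
            _ = _ := one_mul _
      have hφmono : ∀ ω, Monotone fun j : ℕ => ENNReal.ofReal (φ j ω) := by
        intro ω i j hij
        refine ENNReal.ofReal_le_ofReal ?_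
        simp only [hφdef]
        refine mul_le_mul_of_nonneg_left ?_ (Set.indicator_nonneg (fun _ _ => zero_le_one) ω)
        refine Set.indicator_le_indicator_of_subset ?_ (fun _ => zero_le_one) ω
        intro x hx
        have hx' : g x ≤ (((n₁ + i : ℕ) : ℝ≥0) : ℝ≥0∞) := hx
        refine le_trans hx' ?_
        exact_mod_cast Nat.add_le_add_left hij n₁
      have hofint : ∀ j, ENNReal.ofReal (∫ ω, φ j ω ∂Q) = ∫⁻ ω, ENNReal.ofReal (φ j ω) ∂Q :=
        fun j => ofReal_integral_eq_lintegral_ofReal (hφ_int j)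
          (Filter.Eventually.of_forall (hφ0 j))
      have hφ_id : ∀ j : ℕ, ∫ ω, φ j ω ∂Q = ∫ ω in s, X (((n₁ + j : ℕ)) : ℝ≥0) ω ∂μ := by
        intro j
        exact hind (((n₁ + j : ℕ)) : ℝ≥0) s
          (ℱ.mono (le_trans ht1 (by exact_mod_cast Nat.le_add_right n₁ j)) _ hs)
      have hQs : Q s = ⨆ j : ℕ, ∫⁻ ω, ENNReal.ofReal (φ j ω) ∂Q := by
        have hae : ∀ j : ℕ, AEMeasurable (fun ω => ENNReal.ofReal (φ j ω)) Q :=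
          fun j => ENNReal.measurable_ofReal.comp_aemeasurable (hφ_int j).aemeasurable
        have hMCT := lintegral_iSup' hae
          (Filter.Eventually.of_forall fun ω => hφmono ω)
        have hsup : ∀ᵐ ω ∂Q, (⨆ j : ℕ, ENNReal.ofReal (φ j ω))
            = Set.indicator s (fun _ => (1 : ℝ≥0∞)) ω := by
          have hgfin : ∀ᵐ ω ∂Q, g ω ≠ ∞ := by
            rw [ae_iff]
            simpa [not_not] using hQg
          filter_upwards [hgfin] with ω hgω
          by_cases hωs : ω ∈ s
          · obtain ⟨nn, hnn⟩ := ENNReal.exists_nat_gt hgω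
            have hjex : ω ∈ {ω' | g ω' ≤ (((n₁ + nn : ℕ) : ℝ≥0) : ℝ≥0∞)} := by
              refine le_trans hnn.le ?_
              exact_mod_cast Nat.le_add_left nn n₁
            refine le_antisymm ?_ ?_
            · refine iSup_le fun j => ?_
              rw [Set.indicator_of_mem hωs]
              have hle1 : φ j ω ≤ 1 := by
                simp only [hφdef]
                calc Set.indicator s (fun _ => (1:ℝ)) ω
                    * Set.indicator {ω' | g ω' ≤ (((n₁ + j : ℕ) : ℝ≥0) : ℝ≥0∞)}
                      (fun _ => (1:ℝ)) ω
                    ≤ 1 * 1 := mul_le_mul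
                      (Set.indicator_apply_le' (fun _ => le_rfl) (fun _ => zero_le_one))
                      (Set.indicator_apply_le' (fun _ => le_rfl) (fun _ => zero_le_one))
                      (Set.indicator_nonneg (fun _ _ => zero_le_one) ω) zero_le_one
                  _ = 1 := one_mul 1
              calc ENNReal.ofReal (φ j ω) ≤ ENNReal.ofReal 1 := ENNReal.ofReal_le_ofReal hle1
                _ = 1 := by simp
            · refine le_trans ?_ (le_iSup (fun j : ℕ => ENNReal.ofReal (φ j ω)) nn)
              rw [Set.indicator_of_mem hωs]
              have hval : φ nn ω = 1 := by
                simp only [hφdef]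
                rw [Set.indicator_of_mem hωs, Set.indicator_of_mem hjex, one_mul]
              rw [hval]
              simp
          · rw [Set.indicator_of_notMem hωs]
            refine le_antisymm (iSup_le fun j => ?_) zero_le
            have hval : φ j ω = 0 := by
              simp only [hφdef]
              rw [Set.indicator_of_notMem hωs, zero_mul]
            rw [hval]
            simp
        calc Q s = ∫⁻ ω, Set.indicator s (fun _ => (1 : ℝ≥0∞)) ω ∂Q := by
              rw [lintegral_indicator (ℱ.le t _ hs)]
              simp
          _ = ∫⁻ ω, (⨆ j : ℕ, ENNReal.ofReal (φ j ω)) ∂Q := (lintegral_congr_ae hsup).symm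
          _ = ⨆ j : ℕ, ∫⁻ ω, ENNReal.ofReal (φ j ω) ∂Q := hMCT
      have hmono2 : Monotone (fun j : ℕ => ∫⁻ ω, ENNReal.ofReal (φ j ω) ∂Q) :=
        fun i j hij => lintegral_mono fun ω => hφmono ω hij
      have hT : Tendsto (fun j : ℕ => ∫⁻ ω, ENNReal.ofReal (φ j ω) ∂Q) atTop
          (nhds (ENNReal.ofReal (∫ ω in s, Xinf ω ∂μ))) := by
        have h3 : Tendsto (fun j : ℕ => n₁ + j) atTop atTop := by
          have := tendsto_add_atTop_nat n₁
          simpa [Nat.add_comm] using this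
        have h1 : Tendsto (fun j : ℕ => ∫ ω in s, X (((n₁ + j : ℕ)) : ℝ≥0) ω ∂μ) atTop
            (nhds (∫ ω in s, Xinf ω ∂μ)) := (hsetI s (ℱ.le t _ hs)).comp h3
        have h2 : Tendsto (fun j : ℕ => ENNReal.ofReal (∫ ω, φ j ω ∂Q)) atTop
            (nhds (ENNReal.ofReal (∫ ω in s, Xinf ω ∂μ))) := by
          simp only [hφ_id]
          exact (ENNReal.continuous_ofReal.tendsto _).comp h1
        refine Tendsto.congr (fun j => ?_) h2
        exact hofint j
      have h4 := tendsto_nhds_unique (tendsto_atTop_iSup hmono2) hT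
      rw [hQs, h4, hν_apply s (ℱ.le t _ hs)]
  -- Q is finite and equals ν
  have hQfin : IsFiniteMeasure Q := by
    refine ⟨?_⟩
    have h1 := hkeyQν 0 Set.univ MeasurableSet.univ
    rw [hν_apply Set.univ MeasurableSet.univ] at h1
    rw [h1]
    exact ENNReal.ofReal_lt_top
  haveI := hQfin
  have hQeq : Q = ν := by
    refine ext_of_generate_finite {sι : Set Ω | ∃ t : ℝ≥0, MeasurableSet[ℱ t] sι} ?_ ?_ ?_ ?_
    · exact hNP3.trans
        (MeasurableSpace.measurableSpace_iSup_eq (fun t : ℝ≥0 => (ℱ t : MeasurableSpace Ω)))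
    · rintro s1 ⟨t1, h1⟩ s2 ⟨t2, h2⟩ -
      rcases le_total t1 t2 with hle | hle
      · exact ⟨t2, (ℱ.mono hle _ h1).inter h2⟩
      · exact ⟨t1, h1.inter (ℱ.mono hle _ h2)⟩
    · rintro sι ⟨t, hst⟩
      exact hkeyQν t sι hst
    · rw [hkeyQν 0 Set.univ MeasurableSet.univ]
  refine ⟨Xinf, hXinf_meas, hXfull, hQeq, ?_, ?_⟩
  · intro F hF hF0
    have htoReal_ae : (fun ω => F ω * (ENNReal.ofReal (Xinf ω)).toReal) =ᵐ[μ]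
        (fun ω => F ω * Xinf ω) := by
      filter_upwards [hXinf0] with ω e
      rw [ENNReal.toReal_ofReal e]
    rw [hQeq, hνdef, integrable_withDensity_iff hdens_meas
      (Filter.Eventually.of_forall fun ω => ENNReal.ofReal_lt_top), integrable_congr htoReal_ae]
  · intro F hF hF0 hFint M hM
    obtain ⟨hMmart, hMrc, _hMll, hMid⟩ := hM
    have htoReal_ae : (fun ω => F ω * (ENNReal.ofReal (Xinf ω)).toReal) =ᵐ[μ]
        (fun ω => F ω * Xinf ω) := by
      filter_upwards [hXinf0] with ω e
      rw [ENNReal.toReal_ofReal e]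
    have hh_int : Integrable (fun ω => F ω * Xinf ω) μ := by
      have h1 := hFint
      rw [hQeq, hνdef, integrable_withDensity_iff hdens_meas
        (Filter.Eventually.of_forall fun ω => ENNReal.ofReal_lt_top)] at h1
      exact (integrable_congr htoReal_ae).1 h1
    have hMcond : ∀ t : ℝ≥0, M t =ᵐ[μ] μ[(fun ω => F ω * Xinf ω) | ℱ t] := by
      intro t
      refine ae_eq_condExp_of_forall_setIntegral_eq (ℱ.le t) hh_int
        (fun s hs hμs => (hMmart.integrable t).integrableOn) ?_
        ((hMmart.stronglyAdapted t).aestronglyMeasurable)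
      intro s hs hμs
      have h1 := hMid t (Set.indicator s (fun _ => (1 : ℝ)))
        (measurable_const.indicator hs) ⟨1, fun ω => by by_cases hω : ω ∈ s <;> simp [hω]⟩
      have h2 : ∫ ω, (Set.indicator s (fun _ => (1 : ℝ)) ω) * M t ω ∂μ
          = ∫ ω in s, M t ω ∂μ := by
        rw [← integral_indicator (ℱ.le t _ hs)]
        congr 1; funext ω; by_cases hω : ω ∈ s <;> simp [hω]
      have h4 : ∫ ω, (Set.indicator s (fun _ => (1 : ℝ)) ω) * F ω ∂Q
          = ∫ ω in s, F ω ∂Q := by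
        rw [← integral_indicator (ℱ.le t _ hs)]
        congr 1; funext ω; by_cases hω : ω ∈ s <;> simp [hω]
      have h5 : ∫ ω in s, F ω ∂Q = ∫ ω in s, F ω * Xinf ω ∂μ := by
        rw [hQeq, hνdef, restrict_withDensity (ℱ.le t _ hs)]
        have h6 : (fun ω => ENNReal.ofReal (Xinf ω))
            = fun ω => ((Real.toNNReal (Xinf ω) : ℝ≥0) : ℝ≥0∞) := rfl
        rw [h6, integral_withDensity_eq_integral_smul
          (show Measurable fun ω => Real.toNNReal (Xinf ω)
            from measurable_real_toNNReal.comp hXinf_meas) F]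
        refine integral_congr_ae ?_
        filter_upwards [ae_restrict_of_ae hXinf0] with ω e
        simp [NNReal.smul_def, smul_eq_mul, Real.coe_toNNReal _ e, mul_comm]
      rw [← h2, h1, h4, h5]
    have hlev := SigmaAux.levy ℱ μ hh_int (hSM_of_meas (hF.mul hXinf_meas)) M hMcond
      (fun ω t => hMrc ω t)
    exact ⟨hMcond, hlev.1, hlev.2⟩
end
end
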